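/- arXiv:1212.2930 — 6 statements merged into one kernel-verified Lean document; each statement's English description precedes it below -/
import Mathlib

section
/- Let d ≥ 2, let 0 ≤ m ≤ d, let a be an integer, and let n = ∏_{i=1}^k p_i^{e_i} be the factorization of an integer n ≥ 2 into powers of distinct primes, with gcd(a,n) = 1. Then #S̄_d(m;a;n) = ∏_{i=1}^k #S̄_d(m;a;p_i^{e_i}). -/
/-- The `d`-dimensional modular hyperbola `H_d(a;n)`:
tuples `(x_1,…,x_d)` of integers with `x_1⋯x_d ≡ a (mod n)` and `1 ≤ x_i < n`. -/
def modularHyperbola (d : ℕ) (a : ℤ) (n : ℕ) : Set (Fin d → ℤ) :=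
  {x | (∏ i, x i) ≡ a [ZMOD (n : ℤ)] ∧ ∀ i, 1 ≤ x i ∧ x i < n}

/-- The generalized signed sumset `S̄_d(m;a;n)`:
residues `x_1 + ⋯ + x_m - x_{m+1} - ⋯ - x_d mod n` for `(x_1,…,x_d) ∈ H_d(a;n)`. -/
def signedSumset (d m : ℕ) (a : ℤ) (n : ℕ) : Set (ZMod n) :=
  {s | ∃ x ∈ modularHyperbola d a n,
    s = ((∑ i : Fin d, (if (i : ℕ) < m then x i else -x i) : ℤ) : ZMod n)}

/-!
A residue tuple whose product is the unit `a mod n` consists of units, so each entry has a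
representative in `[1, n)`. Hence `S̄_d(m;a;n)` is the image of the signed-sum map on
`{y ∈ (ℤ/n)^d : ∏ yᵢ = a}`, a description that makes sense in any commutative ring and is
transported by ring isomorphisms and splits over products of rings. The Chinese remainder
isomorphism `ℤ/n ≃ ∏ ℤ/pᵢ^eᵢ` then turns the signed sumset into a product of sets.
-/

section SignedSum

variable {R S : Type*} {d : ℕ}

def signedSum [Ring R] (m : ℕ) (y : Fin d → R) : R :=
  ∑ i : Fin d, if (i : ℕ) < m then y i else -y i

theorem map_signedSum {F : Type*} [Ring R] [Ring S] [FunLike F R S] [RingHomClass F R S] (f : F)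
    (m : ℕ) (y : Fin d → R) :
    f (signedSum m y) = signedSum m (f ∘ y) := by
  simp only [signedSum, map_sum, apply_ite f, map_neg, Function.comp_apply]

variable (R d) in
def residueSignedSumset [CommRing R] (m : ℕ) (a : R) : Set R :=
  signedSum m '' {y : Fin d → R | ∏ i, y i = a}

theorem image_residueSignedSumset [CommRing R] [CommRing S] (e : R ≃+* S) (m : ℕ) (a : R) :
    e '' residueSignedSumset R d m a = residueSignedSumset S d m (e a) := by
  ext s
  constructor
  · rintro ⟨_, ⟨y, hy : ∏ i, y i = a, rfl⟩, rfl⟩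
    exact ⟨e ∘ y, by simp [← map_prod, ← hy], (map_signedSum e m y).symm⟩
  · rintro ⟨z, hz : ∏ i, z i = e a, rfl⟩
    refine ⟨signedSum m (e.symm ∘ z), ⟨e.symm ∘ z, ?_, rfl⟩, ?_⟩
    · simp [← map_prod, hz]
    · simp [map_signedSum, Function.comp_def]

theorem residueSignedSumset_pi {ι : Type*} (R : ι → Type*) [∀ i, CommRing (R i)] (m : ℕ)
    (a : ∀ i, R i) :
    residueSignedSumset (∀ i, R i) d m a =
      Set.univ.pi fun i => residueSignedSumset (R i) d m (a i) := by
  ext s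
  constructor
  · rintro ⟨y, hy : ∏ i, y i = a, rfl⟩ i -
    refine ⟨fun j => y j i, ?_, ?_⟩
    · simp [← hy, Finset.prod_apply]
    · exact (map_signedSum (Pi.evalRingHom R i) m y).symm
  · intro hs
    choose y hy hys using fun i => hs i (Set.mem_univ i)
    refine ⟨fun j i => y i j, ?_, ?_⟩
    · ext i
      simpa [Finset.prod_apply] using hy i
    · ext i
      exact (map_signedSum (Pi.evalRingHom R i) m fun j i => y i j).trans (hys i)

end SignedSum

theorem Set.ncard_univ_pi {ι : Type*} [Fintype ι] {α : ι → Type*} (s : ∀ i, Set (α i)) :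
    (Set.univ.pi s).ncard = ∏ i, (s i).ncard := by
  rw [← Nat.card_coe_set_eq, Nat.card_congr (Equiv.Set.univPi s), Nat.card_pi]
  simp only [Nat.card_coe_set_eq]

theorem signedSumset_eq_image (d m : ℕ) (a : ℤ) (n : ℕ) :
    signedSumset d m a n =
      (fun x : Fin d → ℤ => signedSum m fun i => (x i : ZMod n)) '' modularHyperbola d a n := by
  ext s
  refine exists_congr fun x => and_congr_right fun _ => ?_
  rw [eq_comm]
  dsimp only [signedSum]
  push_cast [apply_ite (Int.cast : ℤ → ZMod n)]
  rfl

theorem image_modularHyperbola (d : ℕ) {a : ℤ} {n : ℕ} (hn : 1 < n) (ha : IsCoprime a n) :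
    (fun x : Fin d → ℤ => fun i => (x i : ZMod n)) '' modularHyperbola d a n =
      {y | ∏ i, y i = (a : ZMod n)} := by
  have : NeZero n := ⟨by omega⟩
  have : Fact (1 < n) := ⟨hn⟩
  ext y
  constructor
  · rintro ⟨x, ⟨hx, -⟩, rfl⟩
    simpa using (ZMod.intCast_eq_intCast_iff _ _ _).mpr hx
  · intro (hy : ∏ i, y i = (a : ZMod n))
    have hunit : ∀ i, IsUnit (y i) := IsUnit.prod_univ_iff.mp <| hy ▸
      (ZMod.coe_int_isUnit_iff_isCoprime a n).mpr ha.symm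
    refine ⟨fun i => (y i).val, ⟨?_, fun i => ⟨?_, ?_⟩⟩, ?_⟩
    · rw [← ZMod.intCast_eq_intCast_iff, ← hy]
      simp
    · exact Int.toNat_le.mp (ZMod.val_pos.mpr (hunit i).ne_zero)
    · exact Int.ofNat_lt.mpr (ZMod.val_lt (y i))
    · ext i
      simp

theorem signedSumset_eq_residueSignedSumset (d m : ℕ) {a : ℤ} {n : ℕ} (hn : 1 < n)
    (ha : IsCoprime a n) :
    signedSumset d m a n = residueSignedSumset (ZMod n) d m (a : ZMod n) := by
  rw [signedSumset_eq_image, residueSignedSumset, ← image_modularHyperbola d hn ha,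
    Set.image_image]

theorem stmt0_general (d m : ℕ) (a : ℤ) (n : ℕ) (hn : 2 ≤ n)
    (ha : IsCoprime a (n : ℤ)) :
    (signedSumset d m a n).ncard =
      ∏ p ∈ n.factorization.support,
        (signedSumset d m a (p ^ n.factorization p)).ncard := by
  have hprime_pow : ∀ p ∈ n.primeFactors, 1 < p ^ n.factorization p := fun p hp =>
    Nat.one_lt_pow (Finsupp.mem_support_iff.mp hp) (Nat.prime_of_mem_primeFactors hp).one_lt
  have hcoprime : ∀ p, IsCoprime a ((p ^ n.factorization p : ℕ) : ℤ) := fun p =>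
    ha.of_isCoprime_of_dvd_right (Int.natCast_dvd_natCast.mpr (Nat.ordProj_dvd n p))
  rw [signedSumset_eq_residueSignedSumset d m (by omega) ha,
    ← Set.ncard_image_of_injective _ (ZMod.equivPi (n := n) (by omega)).injective,
    image_residueSignedSumset, residueSignedSumset_pi, Set.ncard_univ_pi, map_intCast,
    Nat.support_factorization, ← Finset.prod_coe_sort n.primeFactors]
  refine Finset.prod_congr rfl fun p _ => ?_
  rw [signedSumset_eq_residueSignedSumset d m (hprime_pow p p.2) (hcoprime p)]
  rfl

theorem stmt0 (d m : ℕ) (hd : 2 ≤ d) (hm : m ≤ d) (a : ℤ) (n : ℕ) (hn : 2 ≤ n)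
    (ha : IsCoprime a (n : ℤ)) :
    (signedSumset d m a n).ncard =
      ∏ p ∈ n.factorization.support,
        (signedSumset d m a (p ^ n.factorization p)).ncard :=
  stmt0_general d m a n hn ha
end

section
/- Let t ≥ 1 and let a be an odd integer. Then for every integer k, (2k mod 2^t) ∈ D̄_2(a;2^t) if and only if k² + a is a square mod 2^t. Moreover, the map k ↦ (2k mod 2^t) is a bijection from {k ∈ ℤ : 0 ≤ k < 2^{t−1} and k² + a is a square mod 2^t} onto D̄_2(a;2^t). -/
/-!
If `x * y = a` and `x - y = 2 * k`, then `(y + k) ^ 2 = k ^ 2 + a`; conversely a root `z` of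
`z ^ 2 = k ^ 2 + a` gives the factorisation `(z + k) * (z - k) = a`. For odd `a` both factors of
`x * y ≡ a (mod 2 ^ t)` are odd, so every coordinate difference is even, and `2 * k mod 2 ^ t`
determines `k mod 2 ^ (t - 1)`.
-/

/-- The reduced coordinate difference set `D̄_2(a;n)` of the modular hyperbola `H_2(a;n)`. -/
def coordDiffset (a : ℤ) (n : ℕ) : Set (ZMod n) :=
  {s | ∃ x y : ℤ, x * y ≡ a [ZMOD (n : ℤ)] ∧ 1 ≤ x ∧ x < n ∧ 1 ≤ y ∧ y < n ∧
    s = ((x - y : ℤ) : ZMod n)}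

/-- `u` is a square modulo `N`. -/
def IsSquareMod (u : ℤ) (N : ℕ) : Prop := ∃ x : ℤ, x ^ 2 ≡ u [ZMOD (N : ℤ)]

open Set

theorem Set.bijOn_inter_preimage {α β : Type*} {f : α → β} {s : Set α} {t : Set β}
    (hf : InjOn f s) (ht : t ⊆ f '' s) : BijOn f (s ∩ f ⁻¹' t) t := by
  have := (hf.mono (inter_subset_left (t := f ⁻¹' t))).bijOn_image
  rwa [image_inter_preimage, inter_eq_right.mpr ht] at this

theorem exists_mul_eq_and_sub_eq_two_mul_iff {R : Type*} [CommRing R] (a k : R) :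
    (∃ x y : R, x * y = a ∧ x - y = 2 * k) ↔ IsSquare (k ^ 2 + a) := by
  constructor
  · rintro ⟨x, y, rfl, hxy⟩
    exact ⟨y + k, by rw [sub_eq_iff_eq_add.mp hxy]; ring⟩
  · rintro ⟨z, hz⟩
    exact ⟨z + k, z - k, by linear_combination (-1 : R) * hz, by ring⟩

theorem isSquareMod_iff_isSquare (u : ℤ) (N : ℕ) :
    IsSquareMod u N ↔ IsSquare (u : ZMod N) := by
  constructor
  · rintro ⟨x, hx⟩
    exact ⟨x, by rw [← (ZMod.intCast_eq_intCast_iff _ _ _).mpr hx]; push_cast; ring⟩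
  · rintro ⟨z, hz⟩
    obtain ⟨x, rfl⟩ := ZMod.intCast_surjective z
    exact ⟨x, (ZMod.intCast_eq_intCast_iff _ _ _).mp (by push_cast; rw [hz, sq])⟩

theorem mem_coordDiffset_iff {a : ℤ} {N : ℕ} [NeZero N] (ha : (a : ZMod N) ≠ 0)
    (s : ZMod N) : s ∈ coordDiffset a N ↔ ∃ x y : ZMod N, x * y = a ∧ x - y = s := by
  constructor
  · rintro ⟨x, y, hxy, -, -, -, -, rfl⟩
    refine ⟨x, y, ?_, by push_cast; rfl⟩
    exact_mod_cast (ZMod.intCast_eq_intCast_iff _ _ _).mpr hxy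
  · rintro ⟨x, y, hxy, rfl⟩
    have hx : x ≠ 0 := by rintro rfl; exact ha (by rw [← hxy, zero_mul])
    have hy : y ≠ 0 := by rintro rfl; exact ha (by rw [← hxy, mul_zero])
    refine ⟨x.val, y.val, (ZMod.intCast_eq_intCast_iff _ _ _).mp ?_, ?_,
      by exact_mod_cast x.val_lt, ?_, by exact_mod_cast y.val_lt, ?_⟩
    · push_cast; simp only [ZMod.natCast_zmod_val, hxy]
    · exact_mod_cast Nat.one_le_iff_ne_zero.mpr ((ZMod.val_ne_zero x).mpr hx)
    · exact_mod_cast Nat.one_le_iff_ne_zero.mpr ((ZMod.val_ne_zero y).mpr hy)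
    · push_cast; simp only [ZMod.natCast_zmod_val]

theorem intCast_two_mul_mem_coordDiffset_iff {a : ℤ} {N : ℕ} [NeZero N]
    (ha : (a : ZMod N) ≠ 0) (k : ℤ) :
    ((2 * k : ℤ) : ZMod N) ∈ coordDiffset a N ↔ IsSquareMod (k ^ 2 + a) N := by
  rw [mem_coordDiffset_iff ha, isSquareMod_iff_isSquare]
  push_cast
  exact exists_mul_eq_and_sub_eq_two_mul_iff _ _

theorem intCast_ne_zero_of_odd {a : ℤ} (ha : Odd a) {N : ℕ} (hN : 2 ∣ N) :
    (a : ZMod N) ≠ 0 := by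
  rw [Ne, ZMod.intCast_zmod_eq_zero_iff_dvd]
  exact fun h => Int.not_even_iff_odd.mpr ha
    (even_iff_two_dvd.mpr ((Int.natCast_dvd_natCast.mpr hN).trans h))

theorem exists_intCast_two_mul_eq_of_mem_coordDiffset {a : ℤ} (ha : Odd a) {N : ℕ}
    (hN : 2 ∣ N) {s : ZMod N} (hs : s ∈ coordDiffset a N) :
    ∃ m : ℤ, ((2 * m : ℤ) : ZMod N) = s := by
  obtain ⟨x, y, hxy, -, -, -, -, rfl⟩ := hs
  have hxy2 : x * y % 2 = a % 2 := hxy.of_dvd (Int.natCast_dvd_natCast.mpr hN)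
  obtain ⟨hx, hy⟩ := Int.odd_mul.mp (Int.odd_iff.mpr (hxy2.trans (Int.odd_iff.mp ha)))
  obtain ⟨m, hm⟩ := hx.sub_odd hy
  exact ⟨m, by rw [hm, two_mul]⟩

theorem intCast_two_mul_emod (M : ℕ) (m : ℤ) :
    ((2 * (m % M) : ℤ) : ZMod (2 * M)) = ((2 * m : ℤ) : ZMod (2 * M)) :=
  (ZMod.intCast_eq_intCast_iff _ _ _).mpr <| by
    exact_mod_cast (Int.mod_modEq m M).mul_left' (c := 2)

theorem injOn_intCast_two_mul (M : ℕ) :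
    InjOn (fun k : ℤ => ((2 * k : ℤ) : ZMod (2 * M))) (Ico 0 (M : ℤ)) := by
  rintro k ⟨hk0, hkM⟩ l ⟨hl0, hlM⟩ hkl
  have hkl' : k % M = l % M := Int.ModEq.mul_left_cancel' two_ne_zero <| by
    exact_mod_cast (ZMod.intCast_eq_intCast_iff _ _ _).mp hkl
  rwa [Int.emod_eq_of_lt hk0 hkM, Int.emod_eq_of_lt hl0 hlM] at hkl'

theorem coordDiffset_subset_image_intCast_two_mul {a : ℤ} (ha : Odd a) (M : ℕ) [NeZero M] :
    coordDiffset a (2 * M) ⊆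
      (fun k : ℤ => ((2 * k : ℤ) : ZMod (2 * M))) '' Ico 0 (M : ℤ) := by
  intro s hs
  obtain ⟨m, rfl⟩ := exists_intCast_two_mul_eq_of_mem_coordDiffset ha (dvd_mul_right 2 M) hs
  have hM : (0 : ℤ) < M := by exact_mod_cast Nat.pos_of_ne_zero (NeZero.ne M)
  exact ⟨m % M, ⟨Int.emod_nonneg m hM.ne', Int.emod_lt_of_pos m hM⟩,
    intCast_two_mul_emod M m⟩

theorem stmt3 (t : ℕ) (ht : 1 ≤ t) (a : ℤ) (ha : Odd a) :
    (∀ k : ℤ, ((2 * k : ℤ) : ZMod (2 ^ t)) ∈ coordDiffset a (2 ^ t) ↔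
      IsSquareMod (k ^ 2 + a) (2 ^ t)) ∧
    Set.BijOn (fun k : ℤ => ((2 * k : ℤ) : ZMod (2 ^ t)))
      {k : ℤ | 0 ≤ k ∧ k < (2 : ℤ) ^ (t - 1) ∧ IsSquareMod (k ^ 2 + a) (2 ^ t)}
      (coordDiffset a (2 ^ t)) := by
  obtain ⟨s, rfl⟩ : ∃ s, t = s + 1 := ⟨t - 1, by omega⟩
  rw [Nat.add_sub_cancel, pow_succ']
  have key := intCast_two_mul_mem_coordDiffset_iff
    (intCast_ne_zero_of_odd ha (dvd_mul_right 2 (2 ^ s)))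
  refine ⟨key, ?_⟩
  convert Set.bijOn_inter_preimage (injOn_intCast_two_mul (2 ^ s))
    (coordDiffset_subset_image_intCast_two_mul ha (2 ^ s)) using 1
  ext k
  simp only [mem_ofPred_eq, mem_inter_iff, mem_Ico, mem_preimage, key, and_assoc, Nat.cast_pow,
    Nat.cast_ofNat]
end

section
/- Let t ≥ 5, let m be a nonnegative integer, and write m = 4b + r with 0 ≤ r ≤ 3. Then for every integer k, k² + 3 + 8m is a square mod 2^t if and only if k ≡ 4r+1 (mod 16) or k ≡ −(4r+1) (mod 16). -/
namespace Int

theorem sq_modEq_sq_two_pow_iff {a k : ℤ} (ha : Odd a) (n : ℕ) :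
    k ^ 2 ≡ a ^ 2 [ZMOD 2 ^ (n + 2)] ↔ k ≡ a [ZMOD 2 ^ (n + 1)] ∨ k ≡ -a [ZMOD 2 ^ (n + 1)] := by
  simp only [Int.modEq_iff_dvd]
  constructor
  · intro h
    obtain ⟨e, rfl⟩ : ∃ e, k = a - 2 * e := by
      have h2 : Even (a ^ 2 - k ^ 2) := even_iff_two_dvd.2 ((dvd_pow_self 2 (by omega)).trans h)
      obtain ⟨e, he⟩ : Even (a - k) := by simpa [parity_simps] using h2
      exact ⟨e, by linarith⟩
    have h4 : (2 : ℤ) ^ n ∣ e * (a - e) := by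
      rw [pow_add] at h
      exact (mul_dvd_mul_iff_right (by norm_num)).1 (h.trans ⟨1, by ring⟩)
    rcases Int.even_or_odd e with he | he
    · have hae : IsCoprime (2 ^ n) (a - e) := (isCoprime_two_left.2 (ha.sub_even he)).pow_left
      obtain ⟨c, hc⟩ := hae.dvd_of_dvd_mul_right h4
      exact Or.inl ⟨c, by rw [hc]; ring⟩
    · have he' : IsCoprime (2 ^ n) e := (isCoprime_two_left.2 he).pow_left
      obtain ⟨c, hc⟩ := he'.dvd_of_dvd_mul_left h4
      exact Or.inr ⟨-c, by linear_combination (-2) * hc⟩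
  · rintro (⟨c, hc⟩ | ⟨c, hc⟩)
    · exact ⟨c * (a - 2 ^ n * c), by linear_combination (a + k - 2 ^ (n + 1) * c) * hc⟩
    · exact ⟨-(c * (a + 2 ^ n * c)), by linear_combination (k - a - 2 ^ (n + 1) * c) * hc⟩

theorem exists_odd_sq_modEq_of_modEq_one_eight {v : ℤ} (hv : v ≡ 1 [ZMOD 8]) (n : ℕ) :
    ∃ x : ℤ, Odd x ∧ x ^ 2 ≡ v [ZMOD 2 ^ (n + 3)] := by
  induction n with
  | zero => exact ⟨1, odd_one, by simpa using hv.symm⟩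
  | succ n ih =>
    obtain ⟨x, ⟨d, rfl⟩, hx⟩ := ih
    obtain ⟨c, hc⟩ := hx.dvd
    refine ⟨2 * d + 1 + 2 ^ (n + 2) * c, ⟨d + 2 ^ (n + 1) * c, by ring⟩,
      Int.modEq_iff_dvd.2 ⟨-(c * d) - 2 ^ n * c ^ 2, ?_⟩⟩
    linear_combination hc

theorem sq_modEq_four_of_sq_modEq_sq_add_three {x k : ℤ} (h : x ^ 2 ≡ k ^ 2 + 3 [ZMOD 8]) :
    x ^ 2 ≡ 4 [ZMOD 32] := by
  have h32 := (ZMod.intCast_eq_intCast_iff _ _ 32).2 (h.mul_left' (c := 4))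
  refine (ZMod.intCast_eq_intCast_iff _ _ 32).1 ?_
  push_cast at h32 ⊢
  -- in `ZMod 32`, `4 * y = 0` says `8 ∣ y`
  exact (by decide : ∀ x k : ZMod 32, 4 * x ^ 2 = 4 * (k ^ 2 + 3) → x ^ 2 = 4) _ _ h32

end Int

theorem isSquareMod_two_pow_of_modEq_four {u : ℤ} (hu : u ≡ 4 [ZMOD 32]) (t : ℕ) :
    IsSquareMod u (2 ^ t) := by
  obtain ⟨s, hs⟩ := hu.symm.dvd
  obtain ⟨x, -, hx⟩ := Int.exists_odd_sq_modEq_of_modEq_one_eight (v := 1 + 8 * s)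
    (Int.modEq_iff_dvd.2 ⟨-s, by ring⟩) t
  refine ⟨2 * x, Int.ModEq.of_dvd (n := 4 * 2 ^ (t + 3)) ?_ ?_⟩
  · push_cast
    exact (pow_dvd_pow 2 (by omega)).mul_left 4
  · rw [mul_pow, show u = 4 * (1 + 8 * s) by linarith]
    exact hx.mul_left' (c := 4)

theorem isSquareMod_two_pow_iff {u k : ℤ} {t : ℕ} (ht : 5 ≤ t) (hu : u ≡ k ^ 2 + 3 [ZMOD 8]) :
    IsSquareMod u (2 ^ t) ↔ u ≡ 4 [ZMOD 32] := by
  refine ⟨fun ⟨x, hx⟩ ↦ ?_, fun h ↦ isSquareMod_two_pow_of_modEq_four h t⟩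
  have hx32 : x ^ 2 ≡ u [ZMOD 32] := hx.of_dvd (by simpa using pow_dvd_pow (2 : ℤ) ht)
  exact hx32.symm.trans
    (Int.sq_modEq_four_of_sq_modEq_sq_add_three ((hx32.of_dvd ⟨4, rfl⟩).trans hu))

theorem stmt4_general (t : ℕ) (ht : 5 ≤ t) (m b r : ℕ) (hm : m = 4 * b + r) :
    ∀ k : ℤ, IsSquareMod (k ^ 2 + 3 + 8 * (m : ℤ)) (2 ^ t) ↔
      (k ≡ 4 * (r : ℤ) + 1 [ZMOD 16] ∨ k ≡ -(4 * (r : ℤ) + 1) [ZMOD 16]) := by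
  intro k
  have hodd : Odd (4 * (r : ℤ) + 1) := ⟨2 * r, by ring⟩
  rw [isSquareMod_two_pow_iff ht (Int.modEq_iff_dvd.2 ⟨-m, by ring⟩)]
  trans k ^ 2 ≡ (4 * r + 1) ^ 2 [ZMOD 32]
  · obtain ⟨e, he⟩ := Int.even_mul_succ_self r
    have h : 4 - (k ^ 2 + 3 + 8 * (m : ℤ)) = ((4 * r + 1) ^ 2 - k ^ 2) - 32 * (b + e) := by
      subst hm; push_cast; linear_combination (-16) * he
    simp only [Int.modEq_iff_dvd]
    rw [h, dvd_sub_left (dvd_mul_right _ _)]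
  · exact Int.sq_modEq_sq_two_pow_iff hodd 3

theorem stmt4 (t : ℕ) (ht : 5 ≤ t) (m b r : ℕ) (hr : r ≤ 3) (hm : m = 4 * b + r) :
    ∀ k : ℤ, IsSquareMod (k ^ 2 + 3 + 8 * (m : ℤ)) (2 ^ t) ↔
      (k ≡ 4 * (r : ℤ) + 1 [ZMOD 16] ∨ k ≡ -(4 * (r : ℤ) + 1) [ZMOD 16]) :=
  stmt4_general t ht m b r hm
end

section
/- Let t ≥ 5 and let a be an odd integer. Then: if a ≡ 7 (mod 8), #D̄_2(a;2^t) = 2^{t−4}/3 + (−1)^{t−1}/3 + 3; if a ≡ 1 (mod 8) or a ≡ 5 (mod 8), #D̄_2(a;2^t) = 2^{t−3}; and if a ≡ 3 (mod 8), #D̄_2(a;2^t) = 2^{t−4}. -/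
section Helpers

lemma sqclass (x : ℤ) : (x % 4 = 0 ∧ x^2 % 8 = 0) ∨ (x % 4 = 2 ∧ x^2 % 8 = 4)
    ∨ (x % 2 = 1 ∧ x^2 % 8 = 1) := by
  have h := Int.emod_emod_of_dvd x (by norm_num : (2:ℤ) ∣ 4)
  have h0 : x % 4 = 0 ∨ x % 4 = 1 ∨ x % 4 = 2 ∨ x % 4 = 3 := by omega
  have hx : x = 4 * (x / 4) + x % 4 := (Int.mul_ediv_add_emod x 4).symm
  set q := x / 4
  rcases h0 with h0 | h0 | h0 | h0 <;> rw [h0] at hx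
  · exact Or.inl ⟨h0, by have : x ^ 2 = 8 * (2 * q^2) := by rw [hx]; ring
                         omega⟩
  · refine Or.inr (Or.inr ⟨by omega, ?_⟩)
    have : x ^ 2 = 8 * (2 * q^2 + q) + 1 := by rw [hx]; ring
    omega
  · exact Or.inr (Or.inl ⟨h0, by
      have : x ^ 2 = 8 * (2 * q^2 + 2*q) + 4 := by rw [hx]; ring
      omega⟩)
  · refine Or.inr (Or.inr ⟨by omega, ?_⟩)
    have : x ^ 2 = 8 * (2 * q^2 + 3*q + 1) + 1 := by rw [hx]; ring
    omega

lemma odd_sq_mod8 (x : ℤ) (hx : x % 2 = 1) : x^2 % 8 = 1 := by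
  rcases sqclass x with ⟨h,_⟩ | ⟨h,_⟩ | ⟨_,h⟩ <;> omega

lemma sq_lift_aux (b : ℤ) (hb : b % 8 = 1) (k : ℕ) :
    ∃ v : ℤ, v % 2 = 1 ∧ (2^(k+3) : ℤ) ∣ v^2 - b := by
  induction k with
  | zero => exact ⟨1, rfl, by norm_num; omega⟩
  | succ k ih =>
    obtain ⟨v, hv, c, hc⟩ := ih
    rcases Int.even_or_odd c with ⟨d, hd⟩ | ⟨d, hd⟩
    · refine ⟨v, hv, d, ?_⟩
      rw [hc, hd, pow_succ]; ring
    · refine ⟨v + 2^(k+2), by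
        have h2 : (2:ℤ) ∣ 2^(k+2) := dvd_pow_self 2 (by omega)
        omega, d + (v+1)/2 + 2^k, ?_⟩
      have e2 : (2:ℤ)^(k+2) = 2 * 2^(k+1) := by rw [← pow_succ']
      have e3 : (2:ℤ)^(k+3) = 4 * 2^(k+1) := by
        rw [show k+3 = (k+1)+2 by omega, pow_add]; ring
      have e4 : (2:ℤ)^(k+1+3) = 8 * 2^(k+1) := by
        rw [show k+1+3 = (k+1)+3 by omega, pow_add]; ring
      have e5 : (2:ℤ)^(k+1) = 2 * 2^k := by rw [← pow_succ']
      set P : ℤ := 2^(k+1) with hP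
      have hc2 : c + v + P = 2 * (d + (v+1)/2 + 2^k) := by omega
      have lhs : (v + 2*P)^2 - b = 4*P*c + 4*P*v + 4*P*P := by
        have hexp : (v + 2*P)^2 - b = (v^2 - b) + 4*P*v + 4*P*P := by ring
        rw [hexp, hc, e3]
      rw [e4, e2, lhs]
      linear_combination (4*P) * hc2

lemma sq_lift (k : ℕ) (b : ℤ) (hb : b % 8 = 1) :
    ∃ v : ℤ, v % 2 = 1 ∧ (2^k : ℤ) ∣ v^2 - b := by
  obtain ⟨v, hv, hd⟩ := sq_lift_aux b hb k
  exact ⟨v, hv, dvd_trans (pow_dvd_pow 2 (by omega)) hd⟩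

lemma pow_two_dvd_of_odd_mul : ∀ (j : ℕ) (x y : ℤ), x % 2 = 1 → (2^j : ℤ) ∣ x * y → (2^j : ℤ) ∣ y := by
  intro j
  induction j with
  | zero => simp
  | succ j ih =>
    intro x y hx hd
    have h2 : (2:ℤ) ∣ x * y := dvd_trans (dvd_pow_self 2 (by omega)) hd
    have hy2 : (2:ℤ) ∣ y := by
      rcases Int.prime_two.dvd_mul.mp h2 with h | h
      · omega
      · exact h
    obtain ⟨y', rfl⟩ := hy2
    have hj : (2:ℤ)^j ∣ x * y' := by
      have h1 : (2:ℤ)^(j+1) ∣ 2 * (x * y') := by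
        have e : x * (2*y') = 2 * (x * y') := by ring
        rwa [e] at hd
      rw [pow_succ'] at h1
      exact (mul_dvd_mul_iff_left (by norm_num : (2:ℤ) ≠ 0)).mp h1
    rw [pow_succ']
    exact mul_dvd_mul_left 2 (ih x y' hx hj)

lemma sqrt_pm (k : ℕ) (hk : 3 ≤ k) (x y : ℤ) (hx : x % 2 = 1) (hy : y % 2 = 1)
    (h : (2^k : ℤ) ∣ x^2 - y^2) : (2^(k-1) : ℤ) ∣ x - y ∨ (2^(k-1):ℤ) ∣ x + y := by
  obtain ⟨d, hd⟩ : ∃ d, x - y = 2 * d := ⟨(x-y)/2, by omega⟩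
  obtain ⟨e, he⟩ : ∃ e, x + y = 2 * e := ⟨(x+y)/2, by omega⟩
  have hde : d + e = x := by omega
  have hk2 : (2:ℤ)^k = 4 * 2^(k-2) := by
    rw [show k = 2+(k-2) by omega, pow_add]; norm_num
  have h4 : (2^(k-2) : ℤ) ∣ d * e := by
    obtain ⟨q, hq⟩ := h
    refine ⟨q, ?_⟩
    have h1 : x^2 - y^2 = (2*d)*(2*e) := by rw [← hd, ← he]; ring
    rw [h1, hk2] at hq
    nlinarith [hq]
  have hk1 : (2:ℤ)^(k-1) = 2 * 2^(k-2) := by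
    rw [show k-1 = 1+(k-2) by omega, pow_add]; norm_num
  rcases Int.even_or_odd d with ⟨d', hd'⟩ | hodd
  · have he_odd : e % 2 = 1 := by omega
    have hdd : (2^(k-2):ℤ) ∣ d :=
      pow_two_dvd_of_odd_mul (k-2) e d he_odd (by rwa [mul_comm] at h4)
    left
    rw [hd, hk1]
    exact mul_dvd_mul_left 2 hdd
  · obtain ⟨d', hd'⟩ := hodd
    have hd_odd : d % 2 = 1 := by omega
    right
    rw [he, hk1]
    exact mul_dvd_mul_left 2 (pow_two_dvd_of_odd_mul (k-2) d e hd_odd h4)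

lemma int_extract (N : ℤ) (hN : N ≠ 0) : ∃ (k : ℕ) (m : ℤ), m % 2 = 1 ∧ N = 2^k * m := by
  obtain ⟨e, n', hn', hn⟩ := Nat.exists_eq_pow_mul_and_not_dvd (n := N.natAbs)
    (by simpa using hN) 2 (by norm_num)
  rcases Int.natAbs_eq N with h | h
  · exact ⟨e, n', by omega, by rw [h, hn]; push_cast; ring⟩
  · exact ⟨e, -n', by omega, by rw [h, hn]; push_cast; ring⟩

lemma not_dvd_pow_mul_odd (p q : ℕ) (hq : q < p) (D : ℤ) (hD : D % 2 = 1) :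
    ¬ (2^p : ℤ) ∣ 2^q * D := by
  intro h
  have e : (2:ℤ)^p = 2^q * 2^(p-q) := by rw [← pow_add]; congr 1; omega
  rw [e] at h
  have h2 : (2:ℤ)^(p-q) ∣ D := (mul_dvd_mul_iff_left (a := (2:ℤ)^q) (by positivity)).mp h
  have : (2:ℤ) ∣ D := dvd_trans (dvd_pow_self 2 (by omega)) h2
  omega

lemma geo (c : ℕ) : ∀ m : ℕ, 3 * (∑ i ∈ Finset.range m, 2^(c+2*i)) + 2^c = 2^c * 4^m := by
  intro m
  induction m with
  | zero => simp
  | succ m ih =>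
    rw [Finset.sum_range_succ, Nat.mul_add]
    have e1 : (2:ℕ)^(c+2*m) = 2^c * 4^m := by
      rw [pow_add]; congr 1; rw [pow_mul]; norm_num
    have e2 : (4:ℕ)^(m+1) = 4 * 4^m := by rw [pow_succ]; ring
    rw [e1, e2]
    nlinarith [ih]

lemma sum_reindex (t m : ℕ) (h : t = 2*m+5 ∨ t = 2*m+6) :
    ∑ i ∈ Finset.range m, 2^(t-(2*i+6)) = ∑ i ∈ Finset.range m, 2^((t-4-2*m) + 2*i) := by
  rw [← Finset.sum_range_reflect (fun i => 2^((t-4-2*m) + 2*i)) m]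
  apply Finset.sum_congr rfl
  intro i hi
  simp only [Finset.mem_range] at hi
  congr 1
  omega

end Helpers

section AP
variable (t : ℕ)

def APf (m : ℕ) (c : ℤ) : Finset (ZMod (2^t)) :=
  Finset.image (fun j : Fin (2^(t-m)) => ((c + 2^m * (j:ℕ) : ℤ) : ZMod (2^t))) Finset.univ

lemma zmod_cast_eq_iff (x y : ℤ) :
    ((x : ZMod (2^t)) = (y : ZMod (2^t))) ↔ (2^t : ℤ) ∣ x - y := by
  rw [ZMod.intCast_eq_intCast_iff, Int.modEq_iff_dvd,
    show (((2^t : ℕ)):ℤ) = (2:ℤ)^t by push_cast; ring, dvd_sub_comm]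

lemma mem_APf {m : ℕ} (hm : m ≤ t) (c : ℤ) (s : ZMod (2^t)) :
    s ∈ APf t m c ↔ ∃ j : ℤ, s = ((c + 2^m * j : ℤ) : ZMod (2^t)) := by
  constructor
  · rintro hs
    obtain ⟨j, _, rfl⟩ := Finset.mem_image.mp hs
    exact ⟨(j:ℕ), rfl⟩
  · rintro ⟨j, rfl⟩
    have hpos : (0:ℤ) < 2^(t-m) := by positivity
    have hc : ((2^(t-m):ℕ):ℤ) = (2:ℤ)^(t-m) := by push_cast; ring
    set j' := (j % 2^(t-m)).toNat with hj'
    have hjb : j' < 2^(t-m) := by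
      have h1 := Int.emod_lt_of_pos j hpos
      have h2 := Int.emod_nonneg j (ne_of_gt hpos)
      omega
    refine Finset.mem_image.mpr ⟨⟨j', by simpa using hjb⟩, Finset.mem_univ _, ?_⟩
    rw [zmod_cast_eq_iff]
    have h2 := Int.emod_nonneg j (ne_of_gt hpos)
    have hdd : (2^(t-m) : ℤ) ∣ (j' : ℤ) - j := by
      have hjj : ((j':ℤ)) = j % 2^(t-m) := by omega
      have hde := Int.mul_ediv_add_emod j ((2:ℤ)^(t-m))
      exact ⟨-(j / 2^(t-m)), by rw [hjj]; linarith⟩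
    obtain ⟨q, hq⟩ := hdd
    refine ⟨q, ?_⟩
    have e : (2:ℤ)^t = 2^m * 2^(t-m) := by rw [← pow_add]; congr 1; omega
    push_cast
    rw [e]
    linear_combination (2:ℤ)^m * hq

lemma card_APf {m : ℕ} (hm : m ≤ t) (c : ℤ) : (APf t m c).card = 2^(t-m) := by
  rw [APf, Finset.card_image_of_injective _ ?_, Finset.card_univ, Fintype.card_fin]
  intro i j hij
  rw [zmod_cast_eq_iff] at hij
  obtain ⟨q, hq⟩ := hij
  have e : (2:ℤ)^t = 2^m * 2^(t-m) := by rw [← pow_add]; congr 1; omega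
  rw [e] at hq
  have h1 : ((i:ℕ):ℤ) - ((j:ℕ):ℤ) = 2^(t-m) * q := by
    have h2 : (2:ℤ)^m * (((i:ℕ):ℤ) - ((j:ℕ):ℤ)) = 2^m * (2^(t-m) * q) := by
      linear_combination hq
    exact (mul_left_cancel₀ (a := (2:ℤ)^m) (by positivity) h2)
  have hi : ((i:ℕ):ℤ) < 2^(t-m) := by exact_mod_cast i.isLt
  have hj : ((j:ℕ):ℤ) < 2^(t-m) := by exact_mod_cast j.isLt
  have hi0 : (0:ℤ) ≤ ((i:ℕ):ℤ) := by positivity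
  have hj0 : (0:ℤ) ≤ ((j:ℕ):ℤ) := by positivity
  have hP : (0:ℤ) < 2^(t-m) := by positivity
  have : ((i:ℕ):ℤ) = ((j:ℕ):ℤ) := by
    rcases lt_trichotomy q 0 with h | h | h
    · nlinarith
    · rw [h, mul_zero] at h1; omega
    · nlinarith
  exact Fin.ext (by exact_mod_cast this)

lemma APf_disj_sq {m m' μ : ℕ} (hμ : 2 ≤ μ) (h1 : μ ≤ m) (h2 : μ ≤ m') (hm : m ≤ t) (hm' : m' ≤ t)
    (x y : ℤ) (hx : x % 2 = 1) (hy : y % 2 = 1) (h : ¬ (2^μ : ℤ) ∣ x^2 - y^2) :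
    Disjoint (APf t m (2*x)) (APf t m' (2*y)) := by
  rw [Finset.disjoint_left]
  intro s hs hs'
  rw [mem_APf t hm] at hs
  rw [mem_APf t hm'] at hs'
  obtain ⟨j, rfl⟩ := hs
  obtain ⟨j', hj'⟩ := hs'
  rw [zmod_cast_eq_iff] at hj'
  apply h
  have hd1 : (2^μ:ℤ) ∣ 2^m * j := Dvd.dvd.mul_right (pow_dvd_pow 2 h1) j
  have hd2 : (2^μ:ℤ) ∣ 2^m' * j' := Dvd.dvd.mul_right (pow_dvd_pow 2 h2) j'
  have hd3 : (2^μ:ℤ) ∣ (2*x + 2^m*j) - (2*y + 2^m'*j') :=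
    dvd_trans (pow_dvd_pow 2 (le_trans h1 hm)) hj'
  have hd4 : (2^μ:ℤ) ∣ 2*x - 2*y := by
    have e : 2*x - 2*y = ((2*x + 2^m*j) - (2*y + 2^m'*j')) - 2^m*j + 2^m'*j' := by ring
    rw [e]
    exact dvd_add (dvd_sub hd3 hd1) hd2
  obtain ⟨d, hd⟩ := hd4
  have e2 : (2:ℤ)^μ = 2 * 2^(μ-1) := by rw [← pow_succ']; congr 1; omega
  have hd5 : x - y = 2^(μ-1) * d := by
    rw [e2] at hd
    linarith [mul_left_cancel₀ (a := (2:ℤ)) (by norm_num) (by linarith [hd] : 2 * (x - y) = 2 * (2^(μ-1)*d))]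
  obtain ⟨e, he⟩ : ∃ e, x + y = 2 * e := ⟨(x+y)/2, by omega⟩
  refine ⟨d * e, ?_⟩
  have hxy : x^2 - y^2 = (x-y)*(x+y) := by ring
  rw [hxy, hd5, he, e2]
  ring

lemma APf_disj_pm {m : ℕ} (hm3 : 3 ≤ m) (hm : m ≤ t) (x : ℤ) (hx : x % 2 = 1) :
    Disjoint (APf t m (2*x)) (APf t m (2*(-x))) := by
  rw [Finset.disjoint_left]
  intro s hs hs'
  rw [mem_APf t hm] at hs hs'
  obtain ⟨j, rfl⟩ := hs
  obtain ⟨j', hj'⟩ := hs'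
  rw [zmod_cast_eq_iff] at hj'
  have hd3 : (2^m:ℤ) ∣ (2*x + 2^m*j) - (2*(-x) + 2^m*j') :=
    dvd_trans (pow_dvd_pow 2 hm) hj'
  have hd4 : (2^m:ℤ) ∣ 4*x := by
    have e : 4*x = ((2*x + 2^m*j) - (2*(-x) + 2^m*j')) - 2^m*j + 2^m*j' := by ring
    rw [e]
    exact dvd_add (dvd_sub hd3 (Dvd.dvd.mul_right dvd_rfl j)) (Dvd.dvd.mul_right dvd_rfl j')
  obtain ⟨d, hd⟩ := hd4
  have e2 : (2:ℤ)^m = 4 * 2^(m-2) := by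
    rw [show m = 2+(m-2) by omega, pow_add]; norm_num
  rw [e2] at hd
  have hx2 : x = 2^(m-2) * d := by nlinarith [hd]
  have h2 : (2:ℤ) ∣ 2^(m-2) := dvd_pow_self 2 (by omega)
  obtain ⟨c, hc⟩ := h2
  rw [hc] at hx2
  have hx3 : x = 2*(c*d) := by rw [hx2]; ring
  omega

lemma mem_union_of_sq {κ : ℕ} (hκ3 : 3 ≤ κ) (hκt : κ ≤ t) (w U : ℤ) (hw : w % 2 = 1)
    (hU : U % 2 = 1) (h : (2^κ : ℤ) ∣ w^2 - U^2) :
    ((2*w : ℤ) : ZMod (2^t)) ∈ APf t κ (2*U) ∪ APf t κ (2*(-U)) := by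
  have e2 : (2:ℤ)^κ = 2 * 2^(κ-1) := by rw [← pow_succ']; congr 1; omega
  rcases sqrt_pm κ hκ3 w U hw hU h with hd | hd
  · obtain ⟨d, hdd⟩ := hd
    refine Finset.mem_union_left _ ((mem_APf t hκt _ _).mpr ⟨d, ?_⟩)
    rw [zmod_cast_eq_iff]
    have : 2*w - (2*U + 2^κ*d) = 0 := by rw [e2]; linarith [hdd]
    rw [this]
    exact dvd_zero _
  · obtain ⟨d, hdd⟩ := hd
    refine Finset.mem_union_right _ ((mem_APf t hκt _ _).mpr ⟨d, ?_⟩)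
    rw [zmod_cast_eq_iff]
    have : 2*w - (2*(-U) + 2^κ*d) = 0 := by rw [e2]; linarith [hdd]
    rw [this]
    exact dvd_zero _

end AP

lemma hyper_char (t : ℕ) (ht : 2 ≤ t) (a : ℤ) (ha : Odd a) :
    coordDiffset a (2^t) =
      {s : ZMod (2^t) | ∃ w v : ℤ, (2^t : ℤ) ∣ (w^2 + a - v^2) ∧ s = ((2*w : ℤ) : ZMod (2^t))} := by
  have hcast : ((2^t : ℕ) : ℤ) = (2:ℤ)^t := by push_cast; ring
  have hpos : (0:ℤ) < 2^t := by positivity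
  have h2dvd : (2:ℤ) ∣ 2^t := dvd_pow_self 2 (by omega)
  have haodd : a % 2 = 1 := Int.odd_iff.mp ha
  ext s
  simp only [coordDiffset, Set.mem_setOf_eq]
  constructor
  · rintro ⟨x, y, hxy, hx1, hx2, hy1, hy2, rfl⟩
    rw [hcast] at hxy
    have hdvd : (2:ℤ)^t ∣ a - x*y := Int.ModEq.dvd hxy
    have hodd : (x*y) % 2 = 1 := by
      have h2 : x*y ≡ a [ZMOD 2] := hxy.of_dvd h2dvd
      have := h2.dvd
      omega
    have hxodd : x % 2 = 1 ∧ y % 2 = 1 := by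
      rcases Int.even_or_odd x with ⟨x', rfl⟩ | hx
      · exfalso; have : 2*(x'*y) = (x'+x')*y := by ring
        omega
      rcases Int.even_or_odd y with ⟨y', rfl⟩ | hy
      · exfalso; have : 2*(x*y') = x*(y'+y') := by ring
        omega
      exact ⟨Int.odd_iff.mp hx, Int.odd_iff.mp hy⟩
    obtain ⟨w, hw⟩ : ∃ w, x = 2*w + y := ⟨(x-y)/2, by omega⟩
    refine ⟨w, w + y, ?_, by rw [show x - y = 2*w by omega]⟩
    have : w^2 + a - (w+y)^2 = a - x*y := by rw [hw]; ring
    rw [this]; exact hdvd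
  · rintro ⟨w, v, hdvd, rfl⟩
    have hwv : (w+v) % 2 = 1 := by
      have h2 : (2:ℤ) ∣ (w^2 + a - v^2) := dvd_trans h2dvd hdvd
      rcases sqclass w with ⟨h1,h2'⟩|⟨h1,h2'⟩|⟨h1,h2'⟩ <;>
        rcases sqclass v with ⟨h3,h4⟩|⟨h3,h4⟩|⟨h3,h4⟩ <;> omega
    refine ⟨(w+v) % 2^t, (v-w) % 2^t, ?_, ?_, ?_, ?_, ?_, ?_⟩
    · rw [hcast]
      have e1 : (w+v) % 2^t ≡ w+v [ZMOD 2^t] := Int.emod_emod_of_dvd _ dvd_rfl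
      have e2 : (v-w) % 2^t ≡ v-w [ZMOD 2^t] := Int.emod_emod_of_dvd _ dvd_rfl
      calc ((w+v) % 2^t) * ((v-w) % 2^t) ≡ (w+v)*(v-w) [ZMOD 2^t] := e1.mul e2
        _ ≡ a [ZMOD 2^t] := by
            have hdd : (2:ℤ)^t ∣ a - (w+v)*(v-w) := by
              have e : a - (w+v)*(v-w) = (w^2 + a - v^2) := by ring
              rw [e]; exact hdvd
            exact Int.modEq_iff_dvd.mpr hdd
    · have h1 : ((w+v) % 2^t) % 2 = 1 := by
        rw [Int.emod_emod_of_dvd _ h2dvd]; exact hwv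
      have := Int.emod_nonneg (w+v) (ne_of_gt hpos)
      omega
    · have := Int.emod_lt_of_pos (w+v) hpos
      omega
    · have h1 : ((v-w) % 2^t) % 2 = 1 := by
        rw [Int.emod_emod_of_dvd _ h2dvd]; omega
      have := Int.emod_nonneg (v-w) (ne_of_gt hpos)
      omega
    · have := Int.emod_lt_of_pos (v-w) hpos
      omega
    · rw [ZMod.intCast_eq_intCast_iff]
      have e1 : (w+v) % 2^t ≡ w+v [ZMOD 2^t] := Int.emod_emod_of_dvd _ dvd_rfl
      have e2 : (v-w) % 2^t ≡ v-w [ZMOD 2^t] := Int.emod_emod_of_dvd _ dvd_rfl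
      have e3 := e1.sub e2
      rw [hcast]
      refine Int.ModEq.symm ?_
      calc ((w+v) % 2^t) - ((v-w) % 2^t) ≡ (w+v) - (v-w) [ZMOD 2^t] := e3
        _ = 2*w := by ring
lemma count15 (t : ℕ) (ht : 5 ≤ t) (a : ℤ) (ha : a % 8 = 1 ∨ a % 8 = 5) :
    ({s : ZMod (2^t) | ∃ w v : ℤ, (2^t:ℤ) ∣ (w^2 + a - v^2) ∧ s = ((2*w:ℤ) : ZMod (2^t))}).ncard
      = 2^(t-3) := by
  have h8t : (8:ℤ) ∣ 2^t := by
    have : (2:ℤ)^3 ∣ 2^t := pow_dvd_pow 2 (by omega)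
    norm_num at this; exact this
  have hset : {s : ZMod (2^t) | ∃ w v : ℤ, (2^t:ℤ) ∣ (w^2 + a - v^2) ∧ s = ((2*w:ℤ) : ZMod (2^t))}
      = ↑(APf t 3 (a-1)) := by
    ext s
    simp only [Set.mem_setOf_eq, Finset.coe_sort_coe, Finset.mem_coe]
    constructor
    · rintro ⟨w, v, hdvd, rfl⟩
      have h8 : (8:ℤ) ∣ (w^2 + a - v^2) := dvd_trans h8t hdvd
      have hw4 : (8:ℤ) ∣ 2*w - (a-1) := by
        rcases sqclass w with ⟨h1,h2⟩|⟨h1,h2⟩|⟨h1,h2⟩ <;>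
          rcases sqclass v with ⟨h3,h4⟩|⟨h3,h4⟩|⟨h3,h4⟩ <;> omega
      rw [mem_APf t (by omega)]
      obtain ⟨j, hj⟩ := hw4
      refine ⟨j, ?_⟩
      rw [zmod_cast_eq_iff]
      have e : 2*w - ((a-1) + 2^3*j) = 0 := by norm_num; omega
      rw [e]; exact dvd_zero _
    · intro hs
      rw [mem_APf t (by omega)] at hs
      obtain ⟨j, rfl⟩ := hs
      set w := (a-1)/2 + 4*j with hw
      have hb : (w^2 + a) % 8 = 1 := by
        rcases sqclass w with ⟨h1,h2⟩|⟨h1,h2⟩|⟨h1,h2⟩ <;> omega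
      obtain ⟨v, hvo, hvd⟩ := sq_lift t (w^2+a) hb
      refine ⟨w, v, ?_, ?_⟩
      · have e : w^2 + a - v^2 = -(v^2 - (w^2+a)) := by ring
        rw [e]; exact dvd_neg.mpr hvd
      · rw [zmod_cast_eq_iff]
        have e : (a-1) + 2^3*j - 2*w = 0 := by norm_num; omega
        rw [e]; exact dvd_zero _
  rw [hset, Set.ncard_coe_finset, card_APf t (by omega)]
lemma count3 (t : ℕ) (ht : 5 ≤ t) (a : ℤ) (ha : a % 8 = 3) :
    ({s : ZMod (2^t) | ∃ w v : ℤ, (2^t:ℤ) ∣ (w^2 + a - v^2) ∧ s = ((2*w:ℤ) : ZMod (2^t))}).ncard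
      = 2^(t-4) := by
  have h8t : (8:ℤ) ∣ 2^t := by
    have h : (2:ℤ)^3 ∣ 2^t := pow_dvd_pow 2 (by omega)
    norm_num at h; exact h
  have h32t : ((2:ℤ)^5) ∣ 2^t := pow_dvd_pow 2 (by omega)
  obtain ⟨u, huo, huu⟩ := sq_lift 5 (4-a) (by omega)
  have hset : {s : ZMod (2^t) | ∃ w v : ℤ, (2^t:ℤ) ∣ (w^2 + a - v^2) ∧ s = ((2*w:ℤ) : ZMod (2^t))}
      = ↑(APf t 5 (2*u) ∪ APf t 5 (2*(-u))) := by
    ext s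
    simp only [Set.mem_setOf_eq, Finset.coe_union, Set.mem_union, Finset.mem_coe]
    constructor
    · rintro ⟨w, v, hdvd, rfl⟩
      have h8 : (8:ℤ) ∣ (w^2 + a - v^2) := dvd_trans h8t hdvd
      have hkey : w % 2 = 1 ∧ v % 4 = 2 := by
        rcases sqclass w with ⟨h1,h2⟩|⟨h1,h2⟩|⟨h1,h2⟩ <;>
          rcases sqclass v with ⟨h3,h4⟩|⟨h3,h4⟩|⟨h3,h4⟩ <;> omega
      obtain ⟨r, hr⟩ : ∃ r, v = 2*r := ⟨v/2, by omega⟩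
      have hro : r % 2 = 1 := by omega
      have hr8 := odd_sq_mod8 r hro
      have h32 : ((2:ℤ)^5) ∣ (w^2 + a - v^2) := dvd_trans h32t hdvd
      have hv2 : v^2 = 4*r^2 := by rw [hr]; ring
      have hw32 : ((2:ℤ)^5) ∣ w^2 - u^2 := by
        norm_num at h32 huu ⊢
        omega
      have hmem := mem_union_of_sq t (κ := 5) (by omega) (by omega) w u hkey.1 huo hw32
      rcases Finset.mem_union.mp hmem with h | h
      · exact Or.inl h
      · exact Or.inr h
    · intro hs
      have main : ∀ U j : ℤ, U % 2 = 1 → ((2:ℤ)^5 ∣ U^2 - (4-a)) →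
          (∃ w v : ℤ, (2^t:ℤ) ∣ (w^2 + a - v^2) ∧
            ((2*U + 2^5*j : ℤ) : ZMod (2^t)) = ((2*w:ℤ) : ZMod (2^t))) := by
        intro U j hUo hUU
        set w := U + 2^4*j with hw
        have hw2 : w^2 = U^2 + 32*(U*j) + 256*j^2 := by rw [hw]; norm_num; ring
        obtain ⟨γ, hγ⟩ := hUU
        norm_num at hγ
        obtain ⟨M, hM, hM8⟩ : ∃ M, w^2 + a = 4*M ∧ M % 8 = 1 :=
          ⟨(w^2+a)/4, by omega, by omega⟩
        obtain ⟨r, hro, hrd⟩ := sq_lift (t-2) M hM8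
        obtain ⟨q, hq⟩ := hrd
        have et : (2:ℤ)^t = 4 * 2^(t-2) := by
          rw [show t = 2+(t-2) by omega, pow_add]; norm_num
        refine ⟨w, 2*r, ⟨-q, ?_⟩, ?_⟩
        · rw [et]
          linear_combination hM - 4*hq
        · rw [zmod_cast_eq_iff]
          have e0 : (2*U + 2^5*j) - 2*w = 0 := by rw [hw]; ring
          rw [e0]
          exact dvd_zero _
      rcases hs with hs | hs <;> rw [mem_APf t (by omega)] at hs <;> obtain ⟨j, rfl⟩ := hs
      · exact main u j huo huu
      · refine main (-u) j (by omega) ?_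
        have e : (-u)^2 - (4-a) = u^2 - (4-a) := by ring
        rw [e]; exact huu
  rw [hset, Set.ncard_coe_finset,
    Finset.card_union_of_disjoint (APf_disj_pm t (by omega) (by omega) u huo),
    card_APf t (by omega), card_APf t (by omega)]
  rw [← two_mul, ← pow_succ']
  congr 1
  omega
lemma not_dvd_sq_diff {μ p q : ℕ} (hp : μ ≤ p) (hq : μ ≤ q) (x y b1 b2 : ℤ)
    (hx : (2^p:ℤ) ∣ x^2 - b1) (hy : (2^q:ℤ) ∣ y^2 - b2) (hb : ¬ (2^μ:ℤ) ∣ b1 - b2) :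
    ¬ (2^μ:ℤ) ∣ x^2 - y^2 := by
  intro h
  apply hb
  have h1 : (2^μ:ℤ) ∣ x^2-b1 := dvd_trans (pow_dvd_pow 2 hp) hx
  have h2 : (2^μ:ℤ) ∣ y^2-b2 := dvd_trans (pow_dvd_pow 2 hq) hy
  have e : b1 - b2 = ((x^2 - y^2) - (x^2-b1)) + (y^2-b2) := by ring
  rw [e]
  exact dvd_add (dvd_sub h h1) h2

lemma count7 (t : ℕ) (ht : 5 ≤ t) (a : ℤ) (ha : a % 8 = 7) :
    3 * ({s : ZMod (2^t) | ∃ w v : ℤ, (2^t:ℤ) ∣ (w^2 + a - v^2) ∧ s = ((2*w:ℤ) : ZMod (2^t))}).ncard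
      = 2^(t-4) + 8 + 2*(t % 2) := by
  have h8t : (8:ℤ) ∣ 2^t := by
    have h : (2:ℤ)^3 ∣ 2^t := pow_dvd_pow 2 (by omega)
    norm_num at h; exact h
  set m := (t-5)/2 with hm
  have htm : t = 2*m+5 ∨ t = 2*m+6 := by omega
  obtain ⟨uI, huIo, huId⟩ := sq_lift t (-a) (by omega)
  set e₁ := t - 2 + t % 2 with he₁
  have h8e : (8:ℤ) ∣ 2^e₁ := by
    have h : (2:ℤ)^3 ∣ 2^e₁ := pow_dvd_pow 2 (by omega)
    norm_num at h; exact h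
  obtain ⟨uT, huTo, huTd⟩ := sq_lift t (-a + 2^e₁) (by omega)
  have hfam : ∀ i : ℕ, ∃ z : ℤ, z % 2 = 1 ∧ (2^(2*i+7) : ℤ) ∣ z^2 - (-a + 2^(2*i+4)) := by
    intro i
    apply sq_lift
    have h : (8:ℤ) ∣ 2^(2*i+4) := by
      have h' : (2:ℤ)^3 ∣ 2^(2*i+4) := pow_dvd_pow 2 (by omega)
      norm_num at h'; exact h'
    omega
  choose u huo hud using hfam
  -- the three finsets
  set A := APf t t (2*uI) ∪ APf t t (2*(-uI)) with hA
  set B := APf t t (2*uT) ∪ APf t t (2*(-uT)) with hB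
  set C := (Finset.range m).biUnion
      (fun i => APf t (2*i+7) (2*(u i)) ∪ APf t (2*i+7) (2*(-(u i)))) with hC
  -- basic bounds for family indices
  have hib : ∀ i, i < m → 2*i+7 ≤ t := by omega
  -- non-divisibility facts
  have hnIT : ¬ ((2:ℤ)^t) ∣ uI^2 - uT^2 := by
    refine not_dvd_sq_diff (le_refl t) (le_refl t) uI uT _ _ huId huTd ?_
    have e : (-a) - (-a + 2^e₁) = 2^e₁ * (-1) := by ring
    rw [e]
    exact not_dvd_pow_mul_odd t e₁ (by omega) (-1) (by norm_num)
  have hnIi : ∀ i, i < m → ¬ ((2:ℤ)^(2*i+7)) ∣ uI^2 - (u i)^2 := by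
    intro i him
    refine not_dvd_sq_diff (by omega) (le_refl _) uI (u i) _ _
      (dvd_trans (pow_dvd_pow 2 (hib i him)) huId) (hud i) ?_
    have e : (-a) - (-a + 2^(2*i+4)) = 2^(2*i+4) * (-1) := by ring
    rw [e]
    exact not_dvd_pow_mul_odd _ _ (by omega) (-1) (by norm_num)
  have hnTi : ∀ i, i < m → ¬ ((2:ℤ)^(2*i+7)) ∣ uT^2 - (u i)^2 := by
    intro i him
    refine not_dvd_sq_diff (by omega) (le_refl _) uT (u i) _ _
      (dvd_trans (pow_dvd_pow 2 (hib i him)) huTd) (hud i) ?_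
    have hd : 1 ≤ e₁ - (2*i+4) := by omega
    have e : (-a + 2^e₁) - (-a + 2^(2*i+4)) = 2^(2*i+4) * (2^(e₁-(2*i+4)) - 1) := by
      rw [mul_sub, ← pow_add, show 2*i+4 + (e₁-(2*i+4)) = e₁ by omega]
      ring
    rw [e]
    refine not_dvd_pow_mul_odd _ _ (by omega) _ ?_
    have h2 : (2:ℤ) ∣ 2^(e₁-(2*i+4)) := dvd_pow_self 2 (by omega)
    omega
  have hnij : ∀ i j, i < j → j < m → ¬ ((2:ℤ)^(2*i+7)) ∣ (u i)^2 - (u j)^2 := by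
    intro i j hij hjm
    refine not_dvd_sq_diff (le_refl _) (by omega) (u i) (u j) _ _ (hud i) (hud j) ?_
    have e : (-a + 2^(2*i+4)) - (-a + 2^(2*j+4)) = 2^(2*i+4) * (1 - 2^(2*j-2*i)) := by
      rw [mul_sub, ← pow_add]
      rw [show 2*i+4 + (2*j-2*i) = 2*j+4 by omega]
      ring
    rw [e]
    refine not_dvd_pow_mul_odd _ _ (by omega) _ ?_
    have h2 : (2:ℤ) ∣ 2^(2*j-2*i) := dvd_pow_self 2 (by omega)
    omega
  -- the set equality
  have hset : {s : ZMod (2^t) | ∃ w v : ℤ, (2^t:ℤ) ∣ (w^2 + a - v^2) ∧ s = ((2*w:ℤ) : ZMod (2^t))}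
      = ↑(A ∪ B ∪ C) := by
    ext s
    simp only [Set.mem_setOf_eq, Finset.mem_coe]
    rw [hA, hB, hC]
    constructor
    · rintro ⟨w, v, hdvd, rfl⟩
      have h8 : (8:ℤ) ∣ (w^2 + a - v^2) := dvd_trans h8t hdvd
      have hw : w % 2 = 1 := by
        rcases sqclass w with ⟨h1,h2⟩|⟨h1,h2⟩|⟨h1,h2⟩ <;>
          rcases sqclass v with ⟨h3,h4⟩|⟨h3,h4⟩|⟨h3,h4⟩ <;> omega
      have hw8 := odd_sq_mod8 w hw
      by_cases hN : (2^t:ℤ) ∣ w^2 + a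
      · have hsq : (2^t:ℤ) ∣ w^2 - uI^2 := by
          have e : w^2 - uI^2 = (w^2+a) - (uI^2 - (-a)) := by ring
          rw [e]; exact dvd_sub hN huId
        exact Finset.mem_union_left _ (Finset.mem_union_left _
          (mem_union_of_sq t (by omega) le_rfl w uI hw huIo hsq))
      · have hN0 : w^2 + a ≠ 0 := by intro h0; exact hN (by rw [h0]; exact dvd_zero _)
        obtain ⟨k, M, hMo, hNM⟩ := int_extract _ hN0
        obtain ⟨q, hq⟩ := hdvd
        have hklt : k < t := by
          by_contra hcon
          exact hN (by rw [hNM]; exact dvd_mul_of_dvd_left (pow_dvd_pow 2 (by omega)) M)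
        have hv0 : v ≠ 0 := by
          intro h0
          apply hN
          rw [show w^2 + a = 2^t*q + v^2 by linarith [hq], h0]
          exact ⟨q, by ring⟩
        obtain ⟨e, r, hro, hvr⟩ := int_extract v hv0
        have hr8 := odd_sq_mod8 r hro
        have hv2 : v^2 = 2^(2*e) * r^2 := by
          rw [hvr, mul_pow, ← pow_mul, Nat.mul_comm e 2]
        have hE : 2^k * M = 2^(2*e) * r^2 + 2^t * q := by
          rw [← hNM, ← hv2]; linarith [hq]
        have h2elt : 2*e < t := by
          by_contra hcon
          apply hN
          rw [show w^2 + a = 2^t*q + 2^(2*e)*r^2 by rw [hNM]; linarith [hE]]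
          exact dvd_add ⟨q, rfl⟩ (dvd_mul_of_dvd_left (pow_dvd_pow 2 (by omega)) _)
        have hk3 : 3 ≤ k := by
          by_contra hcon
          have h8N : (8:ℤ) ∣ 2^k * M := by
            rw [← hNM]; omega
          have e8 : (8:ℤ) = 2^k * 2^(3-k) := by
            rw [← pow_add, show k + (3-k) = 3 by omega]; norm_num
          rw [e8] at h8N
          have hMd : (2:ℤ)^(3-k) ∣ M :=
            (mul_dvd_mul_iff_left (a := (2:ℤ)^k) (by positivity)).mp h8N
          have h2M : (2:ℤ) ∣ M := dvd_trans (dvd_pow_self 2 (by omega)) hMd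
          omega
        have hkeq : k = 2*e := by
          rcases Nat.lt_trichotomy k (2*e) with hlt | heq | hgt
          · exfalso
            have e1 : (2:ℤ)^(2*e) = 2^k * 2^(2*e-k) := by rw [← pow_add]; congr 1; omega
            have e2 : (2:ℤ)^t = 2^k * 2^(t-k) := by rw [← pow_add]; congr 1; omega
            have hMeq : M = 2^(2*e-k)*r^2 + 2^(t-k)*q := by
              refine mul_left_cancel₀ (a := (2:ℤ)^k) (by positivity) ?_
              rw [hE, e1, e2]; ring
            have o1 : (2:ℤ)^(2*e-k) = 2*2^(2*e-k-1) := by rw [← pow_succ']; congr 1; omega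
            have o2 : (2:ℤ)^(t-k) = 2*2^(t-k-1) := by rw [← pow_succ']; congr 1; omega
            have hM2 : M = 2*(2^(2*e-k-1)*r^2 + 2^(t-k-1)*q) := by rw [hMeq, o1, o2]; ring
            omega
          · exact heq
          · exfalso
            have e1 : (2:ℤ)^k = 2^(2*e) * 2^(k-2*e) := by rw [← pow_add]; congr 1; omega
            have e2 : (2:ℤ)^t = 2^(2*e) * 2^(t-2*e) := by rw [← pow_add]; congr 1; omega
            have hMeq : r^2 = 2^(k-2*e)*M - 2^(t-2*e)*q := by
              refine mul_left_cancel₀ (a := (2:ℤ)^(2*e)) (by positivity) ?_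
              rw [e1, e2] at hE
              linear_combination (-1) * hE
            have o1 : (2:ℤ)^(k-2*e) = 2*2^(k-2*e-1) := by rw [← pow_succ']; congr 1; omega
            have o2 : (2:ℤ)^(t-2*e) = 2*2^(t-2*e-1) := by rw [← pow_succ']; congr 1; omega
            have hM2 : r^2 = 2*(2^(k-2*e-1)*M - 2^(t-2*e-1)*q) := by rw [hMeq, o1, o2]; ring
            omega
        have hMeq : M = r^2 + 2^(t-k)*q := by
          refine mul_left_cancel₀ (a := (2:ℤ)^k) (by positivity) ?_
          have e2 : (2:ℤ)^t = 2^k * 2^(t-k) := by rw [← pow_add]; congr 1; omega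
          rw [hE, e2, ← hkeq]; ring
        rcases (by omega : k ≤ t-3 ∨ k = t-2 ∨ k = t-1) with hk | hk | hk
        · -- family case
          obtain ⟨i, hik, him⟩ : ∃ i, k = 2*i+4 ∧ i < m := ⟨(k-4)/2, by omega, by omega⟩
          have hM8 : M % 8 = 1 := by
            have o3 : (2:ℤ)^(t-k) = 8*2^(t-k-3) := by
              rw [show t-k = 3 + (t-k-3) by omega, pow_add]; norm_num
            have hM3 : M = r^2 + 8*(2^(t-k-3)*q) := by rw [hMeq, o3]; ring
            omega
          obtain ⟨d, hd⟩ : ∃ d, M = 8*d + 1 := ⟨(M-1)/8, by omega⟩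
          have hwd : (2^(k+3):ℤ) ∣ w^2 - (-a + 2^k) := by
            refine ⟨d, ?_⟩
            rw [show (2:ℤ)^(k+3) = 2^k*8 by rw [pow_add]; norm_num]
            linear_combination hNM + 2^k * hd
          have hsq : (2^(k+3):ℤ) ∣ w^2 - (u i)^2 := by
            have e3 : w^2 - (u i)^2 = (w^2 - (-a + 2^k)) - ((u i)^2 - (-a + 2^k)) := by ring
            rw [e3]
            refine dvd_sub hwd ?_
            have hudi := hud i
            rw [← hik] at hudi
            exact dvd_trans (pow_dvd_pow 2 (by omega)) hudi
          have hmem := mem_union_of_sq t (κ := k+3) (by omega) (by omega) w (u i) hw (huo i) hsq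
          rw [show k+3 = 2*i+7 by omega] at hmem
          exact Finset.mem_union_right _ (Finset.mem_biUnion.mpr ⟨i, Finset.mem_range.mpr him, hmem⟩)
        · -- k = t-2, t even
          have he1k : e₁ = k := by omega
          have hM4 : M % 4 = 1 := by
            have hM3 : M = r^2 + 4*q := by
              rw [hMeq, show (2:ℤ)^(t-k) = 4 by rw [show t-k = 2 by omega]; norm_num]
            omega
          obtain ⟨d, hd⟩ : ∃ d, M = 4*d + 1 := ⟨(M-1)/4, by omega⟩
          have hwd : (2^t:ℤ) ∣ w^2 - (-a + 2^e₁) := by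
            refine ⟨d, ?_⟩
            rw [he1k, show (2:ℤ)^t = 2^k*4 by rw [show t = k+2 by omega, pow_add]; norm_num]
            linear_combination hNM + 2^k * hd
          have hsq : (2^t:ℤ) ∣ w^2 - uT^2 := by
            have e3 : w^2 - uT^2 = (w^2 - (-a + 2^e₁)) - (uT^2 - (-a + 2^e₁)) := by ring
            rw [e3]; exact dvd_sub hwd huTd
          exact Finset.mem_union_left _ (Finset.mem_union_right _
            (mem_union_of_sq t (by omega) le_rfl w uT hw huTo hsq))
        · -- k = t-1, t odd
          have he1k : e₁ = k := by omega
          obtain ⟨d, hd⟩ : ∃ d, M = 2*d + 1 := ⟨(M-1)/2, by omega⟩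
          have hwd : (2^t:ℤ) ∣ w^2 - (-a + 2^e₁) := by
            refine ⟨d, ?_⟩
            rw [he1k, show (2:ℤ)^t = 2^k*2 by rw [show t = k+1 by omega, pow_add]; norm_num]
            linear_combination hNM + 2^k * hd
          have hsq : (2^t:ℤ) ∣ w^2 - uT^2 := by
            have e3 : w^2 - uT^2 = (w^2 - (-a + 2^e₁)) - (uT^2 - (-a + 2^e₁)) := by ring
            rw [e3]; exact dvd_sub hwd huTd
          exact Finset.mem_union_left _ (Finset.mem_union_right _
            (mem_union_of_sq t (by omega) le_rfl w uT hw huTo hsq))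
    · intro hs
      rcases Finset.mem_union.mp hs with hs | hs
      · rcases Finset.mem_union.mp hs with hs | hs
        · -- A
          rcases Finset.mem_union.mp hs with hs | hs <;>
            rw [mem_APf t le_rfl] at hs <;> obtain ⟨j, rfl⟩ := hs
          · refine ⟨uI, 0, ?_, ?_⟩
            · have e3 : uI^2 + a - 0^2 = uI^2 - (-a) := by ring
              rw [e3]; exact huId
            · rw [zmod_cast_eq_iff]; exact ⟨j, by ring⟩
          · refine ⟨-uI, 0, ?_, ?_⟩
            · have e3 : (-uI)^2 + a - 0^2 = uI^2 - (-a) := by ring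
              rw [e3]; exact huId
            · rw [zmod_cast_eq_iff]; exact ⟨j, by ring⟩
        · -- B
          have hvsq : ((2:ℤ)^(e₁/2))^2 = 2^e₁ := by rw [← pow_mul]; congr 1; omega
          rcases Finset.mem_union.mp hs with hs | hs <;>
            rw [mem_APf t le_rfl] at hs <;> obtain ⟨j, rfl⟩ := hs
          · refine ⟨uT, 2^(e₁/2), ?_, ?_⟩
            · have e3 : uT^2 + a - ((2:ℤ)^(e₁/2))^2 = uT^2 - (-a + 2^e₁) := by
                rw [hvsq]; ring
              rw [e3]; exact huTd
            · rw [zmod_cast_eq_iff]; exact ⟨j, by ring⟩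
          · refine ⟨-uT, 2^(e₁/2), ?_, ?_⟩
            · have e3 : (-uT)^2 + a - ((2:ℤ)^(e₁/2))^2 = uT^2 - (-a + 2^e₁) := by
                rw [hvsq]; ring
              rw [e3]; exact huTd
            · rw [zmod_cast_eq_iff]; exact ⟨j, by ring⟩
      · -- C
        obtain ⟨i, hi, hs⟩ := Finset.mem_biUnion.mp hs
        rw [Finset.mem_range] at hi
        have main : ∀ U j : ℤ, U % 2 = 1 → ((2:ℤ)^(2*i+7) ∣ U^2 - (-a + 2^(2*i+4))) →
            ∃ w v : ℤ, (2^t:ℤ) ∣ (w^2 + a - v^2) ∧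
              ((2*U + 2^(2*i+7)*j : ℤ) : ZMod (2^t)) = ((2*w:ℤ) : ZMod (2^t)) := by
          intro U j hUo hUd
          obtain ⟨γ, hγ⟩ := hUd
          have eQ3 : (2:ℤ)^(2*i+7) = 8*2^(2*i+4) := by
            rw [show 2*i+7 = 3+(2*i+4) by omega, pow_add]; norm_num
          rw [eQ3] at hγ
          set Q : ℤ := 2^(2*i+4) with hQ
          set w := U + 4*Q*j with hw
          have hNMw : w^2 + a = Q * (1 + 8*(γ + U*j + 2*Q*j^2)) := by
            have expand : w^2 + a = (U^2 - (-a+Q)) + Q + 8*Q*(U*j) + 16*(Q*Q)*j^2 := by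
              rw [hw]; ring
            rw [expand, hγ]; ring
          set M := 1 + 8*(γ + U*j + 2*Q*j^2) with hM
          have hM8 : M % 8 = 1 := by omega
          obtain ⟨r, hro, hrd⟩ := sq_lift (t-(2*i+4)) M hM8
          obtain ⟨p, hp⟩ := hrd
          refine ⟨w, 2^(i+2)*r, ?_, ?_⟩
          · have hv2 : ((2:ℤ)^(i+2)*r)^2 = Q*r^2 := by
              rw [mul_pow, ← pow_mul, show (i+2)*2 = 2*i+4 by omega, hQ]
            have et : (2:ℤ)^t = Q * 2^(t-(2*i+4)) := by rw [hQ, ← pow_add]; congr 1; omega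
            refine ⟨-p, ?_⟩
            rw [hv2, et, hNMw]
            linear_combination (-Q) * hp
          · rw [zmod_cast_eq_iff]
            have e0 : (2*U + 2^(2*i+7)*j) - 2*w = 0 := by rw [hw, eQ3, hQ]; ring
            rw [e0]
            exact dvd_zero _
        rcases Finset.mem_union.mp hs with hs | hs <;>
          rw [mem_APf t (hib i hi)] at hs <;> obtain ⟨j, rfl⟩ := hs
        · exact main (u i) j (huo i) (hud i)
        · refine main (-(u i)) j (by have := huo i; omega) ?_
          have e3 : (-(u i))^2 - (-a + 2^(2*i+4)) = (u i)^2 - (-a + 2^(2*i+4)) := by ring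
          rw [e3]; exact hud i
  -- disjointness
  have hdA : Disjoint (APf t t (2*uI)) (APf t t (2*(-uI))) := APf_disj_pm t (by omega) le_rfl uI huIo
  have hdB : Disjoint (APf t t (2*uT)) (APf t t (2*(-uT))) := APf_disj_pm t (by omega) le_rfl uT huTo
  have hdAB : Disjoint A B := by
    rw [hA, hB, Finset.disjoint_union_left]
    constructor <;> rw [Finset.disjoint_union_right] <;> constructor
    · exact APf_disj_sq t (by omega) le_rfl le_rfl le_rfl le_rfl uI uT huIo huTo hnIT
    · exact APf_disj_sq t (by omega) le_rfl le_rfl le_rfl le_rfl uI (-uT) huIo (by omega)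
        (by rw [neg_sq]; exact hnIT)
    · exact APf_disj_sq t (by omega) le_rfl le_rfl le_rfl le_rfl (-uI) uT (by omega) huTo
        (by rw [neg_sq]; exact hnIT)
    · exact APf_disj_sq t (by omega) le_rfl le_rfl le_rfl le_rfl (-uI) (-uT) (by omega) (by omega)
        (by rw [neg_sq, neg_sq]; exact hnIT)
  have hdCin : ∀ i ∈ Finset.range m, ∀ j ∈ Finset.range m, i ≠ j →
      Disjoint (APf t (2*i+7) (2*(u i)) ∪ APf t (2*i+7) (2*(-(u i))))
               (APf t (2*j+7) (2*(u j)) ∪ APf t (2*j+7) (2*(-(u j)))) := by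
    intro i hi j hj hij
    simp only [Finset.mem_range] at hi hj
    have key : ∀ i j, i < j → j < m →
        Disjoint (APf t (2*i+7) (2*(u i)) ∪ APf t (2*i+7) (2*(-(u i))))
                 (APf t (2*j+7) (2*(u j)) ∪ APf t (2*j+7) (2*(-(u j)))) := by
      intro i j hij hjm
      have hn := hnij i j hij hjm
      rw [Finset.disjoint_union_left]
      constructor <;> rw [Finset.disjoint_union_right] <;> constructor
      · exact APf_disj_sq t (by omega) le_rfl (by omega) (hib i (by omega)) (hib j hjm)
          (u i) (u j) (huo i) (huo j) hn
      · exact APf_disj_sq t (by omega) le_rfl (by omega) (hib i (by omega)) (hib j hjm)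
          (u i) (-(u j)) (huo i) (by have := huo j; omega) (by rw [neg_sq]; exact hn)
      · exact APf_disj_sq t (by omega) le_rfl (by omega) (hib i (by omega)) (hib j hjm)
          (-(u i)) (u j) (by have := huo i; omega) (huo j) (by rw [neg_sq]; exact hn)
      · exact APf_disj_sq t (by omega) le_rfl (by omega) (hib i (by omega)) (hib j hjm)
          (-(u i)) (-(u j)) (by have := huo i; omega) (by have := huo j; omega)
          (by rw [neg_sq, neg_sq]; exact hn)
    rcases Nat.lt_or_ge i j with h | h
    · exact key i j h hj
    · exact (key j i (by omega) hi).symm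
  have hdABC : Disjoint (A ∪ B) C := by
    rw [hC, Finset.disjoint_biUnion_right]
    intro i hi
    simp only [Finset.mem_range] at hi
    rw [Finset.disjoint_union_left]
    constructor
    · rw [hA, Finset.disjoint_union_left]
      constructor <;> rw [Finset.disjoint_union_right] <;> constructor
      · exact APf_disj_sq t (by omega) (hib i hi) le_rfl le_rfl (hib i hi) uI (u i) huIo (huo i) (hnIi i hi)
      · exact APf_disj_sq t (by omega) (hib i hi) le_rfl le_rfl (hib i hi) uI (-(u i)) huIo
          (by have := huo i; omega) (by rw [neg_sq]; exact hnIi i hi)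
      · exact APf_disj_sq t (by omega) (hib i hi) le_rfl le_rfl (hib i hi) (-uI) (u i) (by omega) (huo i)
          (by rw [neg_sq]; exact hnIi i hi)
      · exact APf_disj_sq t (by omega) (hib i hi) le_rfl le_rfl (hib i hi) (-uI) (-(u i)) (by omega)
          (by have := huo i; omega) (by rw [neg_sq, neg_sq]; exact hnIi i hi)
    · rw [hB, Finset.disjoint_union_left]
      constructor <;> rw [Finset.disjoint_union_right] <;> constructor
      · exact APf_disj_sq t (by omega) (hib i hi) le_rfl le_rfl (hib i hi) uT (u i) huTo (huo i) (hnTi i hi)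
      · exact APf_disj_sq t (by omega) (hib i hi) le_rfl le_rfl (hib i hi) uT (-(u i)) huTo
          (by have := huo i; omega) (by rw [neg_sq]; exact hnTi i hi)
      · exact APf_disj_sq t (by omega) (hib i hi) le_rfl le_rfl (hib i hi) (-uT) (u i) (by omega) (huo i)
          (by rw [neg_sq]; exact hnTi i hi)
      · exact APf_disj_sq t (by omega) (hib i hi) le_rfl le_rfl (hib i hi) (-uT) (-(u i)) (by omega)
          (by have := huo i; omega) (by rw [neg_sq, neg_sq]; exact hnTi i hi)
  -- disjointness within family pieces at same index, for inner card
  have hdCi : ∀ i, i < m → Disjoint (APf t (2*i+7) (2*(u i))) (APf t (2*i+7) (2*(-(u i)))) := by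
    intro i hi
    exact APf_disj_pm t (by omega) (hib i hi) (u i) (huo i)
  -- cards
  have h1 : (2:ℕ)^(t-t) = 1 := by rw [Nat.sub_self]; rfl
  have cardA : A.card = 2 := by
    rw [hA, Finset.card_union_of_disjoint hdA, card_APf t le_rfl, card_APf t le_rfl, h1]
  have cardB : B.card = 2 := by
    rw [hB, Finset.card_union_of_disjoint hdB, card_APf t le_rfl, card_APf t le_rfl, h1]
  have cardC : C.card = ∑ i ∈ Finset.range m, 2^(t-(2*i+6)) := by
    rw [hC, Finset.card_biUnion hdCin]
    apply Finset.sum_congr rfl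
    intro i hi
    simp only [Finset.mem_range] at hi
    rw [Finset.card_union_of_disjoint (hdCi i hi), card_APf t (hib i hi), card_APf t (hib i hi),
      ← two_mul, ← pow_succ']
    congr 1
    omega
  have cardF : (A ∪ B ∪ C).card = 4 + ∑ i ∈ Finset.range m, 2^(t-(2*i+6)) := by
    rw [Finset.card_union_of_disjoint hdABC, Finset.card_union_of_disjoint hdAB,
      cardA, cardB, cardC]
  -- final arithmetic
  rw [hset, Set.ncard_coe_finset, cardF]
  have hgeo := geo (t-4-2*m) m
  rw [← sum_reindex t m htm] at hgeo
  have hpow : (2:ℕ)^(t-4-2*m) * 4^m = 2^(t-4) := by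
    rw [show (4:ℕ) = 2^2 by norm_num, ← pow_mul, ← pow_add]
    congr 1
    omega
  rw [hpow] at hgeo
  rcases htm with h | h
  · have hc1 : t-4-2*m = 1 := by omega
    rw [hc1, pow_one] at hgeo
    omega
  · have hc2 : t-4-2*m = 2 := by omega
    rw [hc2] at hgeo
    norm_num at hgeo
    omega
theorem stmt5 (t : ℕ) (ht : 5 ≤ t) (a : ℤ) (ha : Odd a) :
    (a % 8 = 7 → ((coordDiffset a (2 ^ t)).ncard : ℚ) =
      (2 : ℚ) ^ (t - 4) / 3 + (-1 : ℚ) ^ (t - 1) / 3 + 3) ∧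
    (a % 8 = 1 ∨ a % 8 = 5 → ((coordDiffset a (2 ^ t)).ncard : ℚ) = (2 : ℚ) ^ (t - 3)) ∧
    (a % 8 = 3 → ((coordDiffset a (2 ^ t)).ncard : ℚ) = (2 : ℚ) ^ (t - 4)) := by
  have hchar := hyper_char t (by omega) a ha
  refine ⟨?_, ?_, ?_⟩
  · intro h7
    rw [hchar]
    have hc := count7 t ht a h7
    set n := ({s : ZMod (2^t) | ∃ w v : ℤ, (2^t:ℤ) ∣ (w^2 + a - v^2) ∧
        s = ((2*w:ℤ) : ZMod (2^t))}).ncard with hn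
    have hq : (3:ℚ) * (n : ℚ) = 2^(t-4) + 8 + 2*((t % 2 : ℕ) : ℚ) := by
      exact_mod_cast congrArg (fun x : ℕ => (x : ℚ)) hc
    rcases Nat.even_or_odd t with he | ho
    · have h2 : t % 2 = 0 := Nat.even_iff.mp he
      have hodd : Odd (t-1) := by
        rcases he with ⟨c, hc'⟩
        exact ⟨c-1, by omega⟩
      rw [Odd.neg_one_pow hodd]
      rw [h2] at hq
      push_cast at hq
      linarith
    · have h2 : t % 2 = 1 := Nat.odd_iff.mp ho
      have heven : Even (t-1) := by
        rcases ho with ⟨c, hc'⟩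
        exact ⟨c, by omega⟩
      rw [Even.neg_one_pow heven]
      rw [h2] at hq
      push_cast at hq
      linarith
  · intro h15
    rw [hchar, count15 t ht a h15]
    push_cast
    ring
  · intro h3
    rw [hchar, count3 t ht a h3]
    push_cast
    ring
end

section
/- Let t ≥ 5 and let a be an odd integer. Then: if a ≡ 1 (mod 8), #S̄_2(a;2^t) = 2^{t−4}/3 + (−1)^{t−1}/3 + 3; if a ≡ 3 (mod 8) or a ≡ 7 (mod 8), #S̄_2(a;2^t) = 2^{t−3}; and if a ≡ 5 (mod 8), #S̄_2(a;2^t) = 2^{t−4}. -/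
/-- The reduced coordinate sumset `S̄_2(a;n)` of the modular hyperbola `H_2(a;n)`. -/
def coordSumset (a : ℤ) (n : ℕ) : Set (ZMod n) :=
  {s | ∃ x y : ℤ, x * y ≡ a [ZMOD (n : ℤ)] ∧ 1 ≤ x ∧ x < n ∧ 1 ≤ y ∧ y < n ∧
    s = ((x + y : ℤ) : ZMod n)}



namespace Stmt6

/-- the sumset in ZMod form -/
def T (a : ℤ) (n : ℕ) : Set (ZMod n) :=
  {s | ∃ x y : ZMod n, x * y = (a : ZMod n) ∧ s = x + y}

lemma isUnit_intCast_of_odd {n : ℕ} (a : ℤ) (ha : Odd a) :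
    IsUnit (a : ZMod (2 ^ n)) := by
  have h1 : (a.natAbs : ZMod (2^n)) = a ∨ (a.natAbs : ZMod (2^n)) = -a := by
    rcases Int.natAbs_eq a with h | h
    · left
      have : ((a.natAbs : ℤ) : ZMod (2^n)) = ((a : ℤ) : ZMod (2^n)) := by rw [← h]
      rwa [Int.cast_natCast] at this
    · right
      have : ((a.natAbs : ℤ) : ZMod (2^n)) = ((-a : ℤ) : ZMod (2^n)) := by
        congr 1
        omega
      rw [Int.cast_natCast] at this
      push_cast at this
      exact this
  have h2 : IsUnit ((a.natAbs : ℕ) : ZMod (2^n)) := by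
    rw [ZMod.isUnit_iff_coprime]
    have hodd : Odd a.natAbs := Int.natAbs_odd.mpr ha
    have h2d : ¬ (2 ∣ a.natAbs) := by
      intro hdvd
      have := Nat.odd_iff.mp hodd
      omega
    exact Nat.Coprime.pow_right _ ((Nat.prime_two.coprime_iff_not_dvd.mpr h2d).symm)
  rcases h1 with h | h
  · rwa [h] at h2
  · rw [h] at h2; exact (IsUnit.neg_iff _).mp h2

lemma coordSumset_eq (a : ℤ) (t : ℕ) (ht : 1 ≤ t) (ha : Odd a) :
    coordSumset a (2 ^ t) = T a (2 ^ t) := by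
  have hn : (1:ℕ) < 2 ^ t := Nat.one_lt_two_pow (by omega)
  haveI : NeZero (2 ^ t) := ⟨by positivity⟩
  haveI : Fact (1 < 2 ^ t) := ⟨hn⟩
  ext s
  constructor
  · rintro ⟨x, y, hxy, hx1, hxn, hy1, hyn, hs⟩
    refine ⟨(x : ZMod (2^t)), (y : ZMod (2^t)), ?_, ?_⟩
    · have := (ZMod.intCast_eq_intCast_iff (x*y) a (2^t)).mpr hxy
      push_cast at this ⊢
      exact this
    · rw [hs]; push_cast; ring
  · rintro ⟨x, y, hxy, hs⟩
    have hu : IsUnit ((a : ℤ) : ZMod (2^t)) := isUnit_intCast_of_odd a ha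
    have hxu : x ≠ 0 := by
      rintro rfl
      rw [zero_mul] at hxy
      exact hu.ne_zero hxy.symm
    have hyu : y ≠ 0 := by
      rintro rfl
      rw [mul_zero] at hxy
      exact hu.ne_zero hxy.symm
    refine ⟨(x.val : ℤ), (y.val : ℤ), ?_, ?_, ?_, ?_, ?_, ?_⟩
    · rw [← ZMod.intCast_eq_intCast_iff]
      push_cast
      rw [ZMod.natCast_val, ZMod.natCast_val, ZMod.cast_id, ZMod.cast_id]
      exact hxy
    · have : x.val ≠ 0 := fun h => hxu (by rwa [← ZMod.val_eq_zero])
      omega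
    · exact_mod_cast Nat.cast_lt.mpr (ZMod.val_lt x)
    · have : y.val ≠ 0 := fun h => hyu (by rwa [← ZMod.val_eq_zero])
      omega
    · exact_mod_cast Nat.cast_lt.mpr (ZMod.val_lt y)
    · rw [hs]
      push_cast
      rw [ZMod.natCast_val, ZMod.natCast_val, ZMod.cast_id, ZMod.cast_id]

/-- From an integer solution of the quadratic, membership in T. -/
lemma mem_T_of_sol (a : ℤ) (t : ℕ) (S x : ℤ)
    (h : (2^t : ℤ) ∣ x^2 - S*x + a) :
    ((S : ℤ) : ZMod (2^t)) ∈ T a (2^t) := by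
  refine ⟨(x : ZMod (2^t)), ((S - x : ℤ) : ZMod (2^t)), ?_, ?_⟩
  · have hmod : x * (S - x) ≡ a [ZMOD ((2^t : ℕ) : ℤ)] := by
      have : ((2^t : ℕ) : ℤ) ∣ a - x * (S - x) := by
        push_cast
        have e : a - x * (S - x) = x^2 - S*x + a := by ring
        rw [e]; exact h
      exact Int.modEq_iff_dvd.mpr this
    have := (ZMod.intCast_eq_intCast_iff _ _ _).mpr hmod
    push_cast at this ⊢
    exact this
  · push_cast; ring

/-- Extract integer data from membership in T. -/
lemma exists_int_of_mem_T (a : ℤ) (t : ℕ) (s : ZMod (2^t)) (hs : s ∈ T a (2^t)) :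
    ∃ X Y : ℤ, (2^t : ℤ) ∣ X * Y - a ∧ s = ((X + Y : ℤ) : ZMod (2^t)) := by
  obtain ⟨x, y, hxy, rfl⟩ := hs
  haveI : NeZero (2 ^ t) := ⟨by positivity⟩
  refine ⟨(x.val : ℤ), (y.val : ℤ), ?_, ?_⟩
  · have : (((x.val : ℤ) * (y.val : ℤ) - a : ℤ) : ZMod (2^t)) = 0 := by
      push_cast
      rw [ZMod.natCast_val, ZMod.natCast_val, ZMod.cast_id, ZMod.cast_id]
      rw [hxy]; ring
    have := (ZMod.intCast_zmod_eq_zero_iff_dvd _ (2^t)).mp this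
    exact_mod_cast this
  · push_cast
    rw [ZMod.natCast_val, ZMod.natCast_val, ZMod.cast_id, ZMod.cast_id]

/-- Hensel-type lifting for x^2 + B x + A ≡ 0 mod 2^k. -/
lemma lift_all (A B : ℤ) (d : ℕ) (hd : 1 ≤ d) (k₀ : ℕ) (hk₀ : 2*d+1 ≤ k₀)
    (hbase : ∃ x h : ℤ, Odd x ∧ Odd h ∧ 2*x + B = 2^d * h ∧ (2^k₀ : ℤ) ∣ x^2 + B*x + A) :
    ∀ k, k₀ ≤ k → ∃ x : ℤ, Odd x ∧ (2^k : ℤ) ∣ x^2 + B*x + A := by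
  have main : ∀ k, k₀ ≤ k →
      ∃ x h : ℤ, Odd x ∧ Odd h ∧ 2*x + B = 2^d * h ∧ (2^k : ℤ) ∣ x^2 + B*x + A := by
    intro k hk
    induction k, hk using Nat.le_induction with
    | base => exact hbase
    | succ k hk ih =>
      obtain ⟨x, h, hx, hh, hder, hdvd⟩ := ih
      obtain ⟨g, hg⟩ := hdvd
      refine ⟨x + g * 2^(k-d), h + g * 2^(k-2*d+1), ?_, ?_, ?_, ?_⟩
      · rcases hx with ⟨m, hm⟩
        refine ⟨m + g * 2^(k-d-1), ?_⟩
        have h1 : (2:ℤ)^(k-d) = 2 * 2^(k-d-1) := by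
          rw [← pow_succ']
          congr 1
          omega
        rw [hm]
        linear_combination g * h1
      · rcases hh with ⟨m, hm⟩
        refine ⟨m + g * 2^(k-2*d), ?_⟩
        have h1 : (2:ℤ)^(k-2*d+1) = 2 * 2^(k-2*d) := by rw [← pow_succ']
        rw [hm]
        linear_combination g * h1
      · have h1 : (2:ℤ)^d * 2^(k-2*d+1) = 2 * 2^(k-d) := by
          rw [← pow_add, ← pow_succ']
          congr 1
          omega
        linear_combination hder - g * h1
      · have key : (x + g * 2^(k-d))^2 + B*(x + g * 2^(k-d)) + A
            = (x^2 + B*x + A) + g * 2^(k-d) * (2*x + B) + g^2 * (2^(k-d))^2 := by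
          ring
        rw [key, hg, hder]
        have e1 : (2:ℤ)^(k-d) * (2^d * h) = 2^k * h := by
          rw [← mul_assoc, ← pow_add]
          congr 2
          omega
        have e2 : ((2:ℤ)^(k-d))^2 = 2^(k+1) * 2^(k-2*d-1) := by
          rw [← pow_mul, ← pow_add]
          congr 1
          omega
        rw [mul_assoc g, e1, e2]
        have hodd : (2:ℤ) ∣ g + g * h := by
          rcases hh with ⟨m, hm⟩
          exact ⟨g * (m+1), by rw [hm]; ring⟩
        rcases hodd with ⟨c, hc⟩
        refine ⟨c + g^2 * 2^(k-2*d-1), ?_⟩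
        have e3 : (2:ℤ)^(k+1) = 2^k * 2 := by rw [pow_succ]
        rw [e3]
        linear_combination (2:ℤ)^k * hc
  intro k hk
  obtain ⟨x, _, hx, _, _, hdvd⟩ := main k hk
  exact ⟨x, hx, hdvd⟩




variable (t : ℕ)

/-- The set of `s : ZMod 2^t` whose val is `c` mod `2^m`. -/
def fibF (m c : ℕ) : Finset (ZMod (2^t)) :=
  Finset.univ.filter (fun s => s.val % 2^m = c)

lemma mem_fibF {m c : ℕ} {s : ZMod (2^t)} : s ∈ fibF t m c ↔ s.val % 2^m = c := by
  simp [fibF]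

lemma fibF_card (m c : ℕ) (hm : m ≤ t) (hc : c < 2^m) :
    (fibF t m c).card = 2^(t-m) := by
  haveI : NeZero (2 ^ t) := ⟨by positivity⟩
  haveI : NeZero (2 ^ (t-m)) := ⟨by positivity⟩
  have hpow : 2^m * 2^(t-m) = 2^t := by
    rw [← pow_add]; congr 1; omega
  have key : (fibF t m c).card = (Finset.univ : Finset (ZMod (2^(t-m)))).card := by
    refine Finset.card_bij' (fun s _ => ((s.val / 2^m : ℕ) : ZMod (2^(t-m))))
      (fun u _ => ((c + 2^m * u.val : ℕ) : ZMod (2^t))) ?_ ?_ ?_ ?_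
    · intro s hs
      exact Finset.mem_univ _
    · intro u _
      rw [mem_fibF]
      have hu : u.val < 2^(t-m) := ZMod.val_lt u
      have hlt : c + 2^m * u.val < 2^t := by
        have h1 : 2^m * u.val ≤ 2^m * (2^(t-m) - 1) := by
          apply Nat.mul_le_mul_left
          omega
        have h2 : (0:ℕ) < 2^m := by positivity
        nlinarith [h1, h2, hpow]
      rw [ZMod.val_cast_of_lt hlt, Nat.add_mul_mod_self_left, Nat.mod_eq_of_lt hc]
    · intro s hs
      rw [mem_fibF] at hs
      show ((c + 2^m * (((s.val / 2^m : ℕ) : ZMod (2^(t-m))).val) : ℕ) : ZMod (2^t)) = s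
      have hv : s.val / 2^m < 2^(t-m) := by
        have h1 : s.val < 2^t := ZMod.val_lt s
        have h2 : (0:ℕ) < 2^m := by positivity
        apply Nat.div_lt_of_lt_mul
        omega
      rw [ZMod.val_natCast, Nat.mod_eq_of_lt hv]
      have he : c + 2^m * (s.val / 2^m) = s.val := by
        have := Nat.mod_add_div (s.val) (2^m)
        omega
      rw [he]
      simp [ZMod.natCast_val, ZMod.cast_id]
    · intro u _
      have hu : u.val < 2^(t-m) := ZMod.val_lt u
      have hlt : c + 2^m * u.val < 2^t := by
        have h1 : 2^m * u.val ≤ 2^m * (2^(t-m) - 1) := by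
          apply Nat.mul_le_mul_left
          omega
        have h2 : (0:ℕ) < 2^m := by positivity
        nlinarith [h1, h2, hpow]
      show (((((c + 2^m*u.val : ℕ) : ZMod (2^t)).val / 2^m : ℕ)) : ZMod (2^(t-m))) = u
      rw [ZMod.val_cast_of_lt hlt]
      have h2 : (0:ℕ) < 2^m := by positivity
      rw [Nat.add_mul_div_left _ _ h2, Nat.div_eq_of_lt hc]
      simp [ZMod.natCast_val, ZMod.cast_id]
  rw [key, Finset.card_univ, ZMod.card]

lemma mem_fibF_int (m c : ℕ) (hm : m ≤ t) (Z : ℤ) :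
    ((Z : ZMod (2^t)) ∈ fibF t m c) ↔ Z % (2^m : ℤ) = c := by
  haveI : NeZero (2 ^ t) := ⟨by positivity⟩
  rw [mem_fibF]
  have hval : (((Z : ZMod (2^t)).val : ℤ)) = Z % ((2^t : ℕ) : ℤ) := ZMod.val_intCast Z
  have hdvd : ((2:ℤ)^m) ∣ ((2:ℤ)^t) := pow_dvd_pow 2 hm
  constructor
  · intro h
    have : (((Z : ZMod (2^t)).val % 2^m : ℕ) : ℤ) = (c : ℤ) := by exact_mod_cast h
    push_cast at this
    rw [hval] at this
    rwa [Int.emod_emod_of_dvd Z (by push_cast at hdvd ⊢; exact hdvd)] at this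
  · intro h
    have : (((Z : ZMod (2^t)).val % 2^m : ℕ) : ℤ) = (c : ℤ) := by
      push_cast
      rw [hval]
      rw [Int.emod_emod_of_dvd Z (by push_cast at hdvd ⊢; exact hdvd)]
      exact h
    exact_mod_cast this

/-- disjointness of fibers at the same level. -/
lemma fibF_disj (m c c' : ℕ) (hne : c ≠ c') : Disjoint (fibF t m c) (fibF t m c') := by
  rw [Finset.disjoint_left]
  intro s hs hs'
  rw [mem_fibF] at hs hs'
  exact hne (hs ▸ hs')



lemma exists_sqrt (t : ℕ) (ht : 5 ≤ t) (a : ℤ) (ha : a % 8 = 1) :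
    ∃ b : ℤ, Odd b ∧ (2^t : ℤ) ∣ b^2 - a := by
  have := lift_all (-a) 0 1 (by norm_num) 3 (by norm_num)
    ⟨1, 1, ⟨0, by ring⟩, ⟨0, by ring⟩, by ring, by
      rw [show ((2:ℤ)^3) = 8 from by norm_num]
      ring_nf
      omega⟩
    t (by omega)
  obtain ⟨b, hb, hdvd⟩ := this
  exact ⟨b, hb, by have e : b^2 - a = b^2 + 0*b + (-a) := by ring
                   rw [e]; exact hdvd⟩

lemma T_neg (a : ℤ) (n : ℕ) (s : ZMod n) (hs : s ∈ T a n) : -s ∈ T a n := by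
  obtain ⟨x, y, hxy, rfl⟩ := hs
  exact ⟨-x, -y, by rw [← hxy]; ring, by ring⟩

/-- T a = b • T 1 when b² ≡ a. -/
lemma T_eq_image (t : ℕ) (a b : ℤ) (hb : Odd b) (hdvd : (2^t : ℤ) ∣ b^2 - a) :
    T a (2^t) = (fun z => ((b : ℤ) : ZMod (2^t)) * z) '' T 1 (2^t) := by
  have hsq : ((b : ℤ) : ZMod (2^t))^2 = ((a : ℤ) : ZMod (2^t)) := by
    have : ((b^2 - a : ℤ) : ZMod (2^t)) = 0 := by
      rw [ZMod.intCast_zmod_eq_zero_iff_dvd]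
      exact_mod_cast hdvd
    push_cast at this
    linear_combination this
  obtain ⟨u, hu⟩ := isUnit_intCast_of_odd (n := t) b hb
  ext s
  constructor
  · rintro ⟨x, y, hxy, rfl⟩
    refine ⟨(↑u⁻¹ : ZMod (2^t)) * x + (↑u⁻¹ : ZMod (2^t)) * y,
      ⟨(↑u⁻¹ : ZMod (2^t)) * x, (↑u⁻¹ : ZMod (2^t)) * y, ?_, rfl⟩, ?_⟩
    · have h1 : ((↑u⁻¹ : ZMod (2^t)) * x) * ((↑u⁻¹ : ZMod (2^t)) * y)
          = (↑u⁻¹ : ZMod (2^t))^2 * (x * y) := by ring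
      rw [h1, hxy, ← hsq, ← hu, ← mul_pow, Units.inv_mul, one_pow]
      push_cast
      ring
    · show ((b:ℤ) : ZMod (2^t)) * ((↑u⁻¹ : ZMod (2^t)) * x + (↑u⁻¹ : ZMod (2^t)) * y) = x + y
      rw [← hu, mul_add, ← mul_assoc, ← mul_assoc, Units.mul_inv, one_mul, one_mul]
  · rintro ⟨z, ⟨x, y, hxy, rfl⟩, rfl⟩
    refine ⟨((b : ℤ) : ZMod (2^t)) * x, ((b : ℤ) : ZMod (2^t)) * y, ?_, by ring⟩
    push_cast at hxy
    have : ((b:ℤ) : ZMod (2^t)) * x * (((b:ℤ) : ZMod (2^t)) * y)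
        = ((b:ℤ) : ZMod (2^t))^2 * (x*y) := by ring
    rw [this, hxy, hsq, mul_one]

lemma int_two_adic (z : ℤ) (hz : z ≠ 0) : ∃ (p : ℕ) (g : ℤ), Odd g ∧ z = 2^p * g := by
  obtain ⟨p, g₀, hg₀, he⟩ := Nat.exists_eq_pow_mul_and_not_dvd (Int.natAbs_ne_zero.mpr hz) 2 (by norm_num)
  have hodd : Odd (g₀ : ℤ) := by
    rw [Int.odd_coe_nat]
    exact Nat.odd_iff.mpr (by omega)
  rcases Int.natAbs_eq z with h | h
  · exact ⟨p, (g₀ : ℤ), hodd, by rw [h, he]; push_cast; ring⟩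
  · exact ⟨p, -(g₀ : ℤ), hodd.neg, by rw [h, he]; push_cast; ring⟩

lemma emod_eq_of_dvd_sub {M Z c : ℤ} (h : M ∣ Z - c) (h0 : 0 ≤ c) (hc : c < M) :
    Z % M = c := by
  obtain ⟨k, hk⟩ := h
  have : Z = c + M * k := by linarith
  rw [this, Int.add_mul_emod_self_left, Int.emod_eq_of_lt h0 hc]

lemma gh_fact1 (g h : ℤ) (hg : Odd g) (h4 : (4:ℤ) ∣ g + h) : (4:ℤ) ∣ g*h + 1 := by
  obtain ⟨m, hm⟩ := hg
  obtain ⟨k, hk⟩ := h4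
  have hh : h = 4*k - g := by linarith
  refine ⟨k*g - m^2 - m, ?_⟩
  rw [hh, hm]; ring

lemma gh_fact2 (g h : ℤ) (hg : Odd g) (h8 : (8:ℤ) ∣ g + h) : (8:ℤ) ∣ g*h + 1 := by
  obtain ⟨m, hm⟩ := hg
  obtain ⟨k, hk⟩ := h8
  have hh : h = 8*k - g := by linarith
  rcases Int.even_or_odd m with ⟨n, hn⟩ | ⟨n, hn⟩
  · exact ⟨k*g - 2*n^2 - n, by rw [hh, hm, hn]; ring⟩
  · exact ⟨k*g - 2*n^2 - 3*n - 1, by rw [hh, hm, hn]; ring⟩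

lemma gh_fact3 (g h : ℤ) (hg : Odd g) (hgh : Odd (g*h)) (hrel : (32:ℤ) ∣ g + h + 4*(g*h)) :
    (8:ℤ) ∣ g*h - 3 := by
  obtain ⟨j, hj⟩ := hgh
  have h8 : (8:ℤ) ∣ g + h + 4 := by
    obtain ⟨K, hK⟩ := hrel
    exact ⟨4*K - j, by linarith⟩
  obtain ⟨m, hm⟩ := hg
  obtain ⟨k, hk⟩ := h8
  have hh : h = 8*k - g - 4 := by linarith
  rcases Int.even_or_odd m with ⟨n, hn⟩ | ⟨n, hn⟩
  · exact ⟨k*g - 2*n^2 - 3*n - 1, by rw [hh, hm, hn]; ring⟩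
  · exact ⟨k*g - 2*n^2 - 5*n - 3, by rw [hh, hm, hn]; ring⟩




lemma cast_val_eq (t : ℕ) (s : ZMod (2^t)) : ((s.val : ℤ) : ZMod (2^t)) = s := by
  haveI : NeZero (2 ^ t) := ⟨by positivity⟩
  push_cast
  simp [ZMod.natCast_val, ZMod.cast_id]

lemma proj_eq (t m : ℕ) (hm : m ≤ t) (X Y a : ℤ) (h : (2^t:ℤ) ∣ X*Y - a) :
    ((X : ℤ) : ZMod (2^m)) * ((Y : ℤ) : ZMod (2^m)) = ((a:ℤ) : ZMod (2^m)) := by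
  have hd : ((2:ℤ)^m) ∣ X*Y - a := dvd_trans (pow_dvd_pow 2 hm) h
  have : ((X*Y - a : ℤ) : ZMod (2^m)) = 0 := by
    rw [ZMod.intCast_zmod_eq_zero_iff_dvd]
    exact_mod_cast hd
  push_cast at this
  linear_combination this

lemma int_emod_of_zmod_eq (m : ℕ) (Z : ℤ) (w : ℕ) (hw : ((Z : ℤ) : ZMod (2^m)) = ((w:ℕ) : ZMod (2^m))) :
    Z % (2^m : ℤ) = (w : ℤ) % (2^m : ℤ) := by
  have : ((Z : ℤ) : ZMod (2^m)) = (((w:ℕ) : ℤ) : ZMod (2^m)) := by exact_mod_cast hw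
  have := (ZMod.intCast_eq_intCast_iff _ _ _).mp this
  have h2 := this
  unfold Int.ModEq at h2
  push_cast at h2 ⊢
  exact h2

/-- Case a ≡ 3 mod 8 -/
lemma T_eq_case3 (t : ℕ) (ht : 5 ≤ t) (a : ℤ) (ha : a % 8 = 3) :
    T a (2^t) = ↑(fibF t 3 4) := by
  ext s
  constructor
  · intro hs
    obtain ⟨X, Y, hdvd, rfl⟩ := exists_int_of_mem_T a t s hs
    rw [Finset.mem_coe, mem_fibF_int t 3 4 (by omega)]
    have hproj := proj_eq t 3 (by omega) X Y a hdvd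
    have ha8 : ((a : ℤ) : ZMod (2^3)) = ((3:ℤ) : ZMod (2^3)) := by
      rw [ZMod.intCast_eq_intCast_iff]
      unfold Int.ModEq
      norm_num
      omega
    have key : ∀ u v : ZMod (2^3), u * v = 3 → u + v = 4 := by decide
    have h3 : ((3:ℤ) : ZMod (2^3)) = (3 : ZMod (2^3)) := by norm_num
    have := key (X : ZMod (2^3)) (Y : ZMod (2^3)) (by rw [← h3, ← ha8]; push_cast at hproj ⊢; exact hproj)
    have h4 : ((X + Y : ℤ) : ZMod (2^3)) = (((4:ℕ)) : ZMod (2^3)) := by push_cast at this ⊢; exact this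
    have := int_emod_of_zmod_eq 3 (X+Y) 4 h4
    norm_num at this ⊢
    omega
  · intro hs
    rw [Finset.mem_coe, mem_fibF] at hs
    have hs' : (s.val : ℤ) % 8 = 4 := by
      have h8 : ((8:ℕ):ℤ) = (8:ℤ) := by norm_num
      have : ((s.val % 2^3 : ℕ) : ℤ) = ((4:ℕ) : ℤ) := by exact_mod_cast hs
      push_cast at this
      omega
    set Z : ℤ := (s.val : ℤ) with hZ
    obtain ⟨q, hq⟩ : ∃ q : ℤ, Z = 8*q + 4 := ⟨Z / 8, by omega⟩
    have hlift := lift_all a (-Z) 1 (by norm_num) 3 (by norm_num)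
      ⟨1, -(4*q+1), ⟨0, by ring⟩, ⟨-2*q-1, by ring⟩, by rw [hq]; ring, by
        rw [hq, show ((2:ℤ)^3) = 8 from by norm_num]
        ring_nf
        omega⟩
      t (by omega)
    obtain ⟨x, hx, hdvd⟩ := hlift
    have := mem_T_of_sol a t Z x (by
      have e : x^2 - Z*x + a = x^2 + (-Z)*x + a := by ring
      rw [e]; exact hdvd)
    rwa [cast_val_eq] at this

/-- Case a ≡ 7 mod 8 -/
lemma T_eq_case7 (t : ℕ) (ht : 5 ≤ t) (a : ℤ) (ha : a % 8 = 7) :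
    T a (2^t) = ↑(fibF t 3 0) := by
  ext s
  constructor
  · intro hs
    obtain ⟨X, Y, hdvd, rfl⟩ := exists_int_of_mem_T a t s hs
    rw [Finset.mem_coe, mem_fibF_int t 3 0 (by omega)]
    have hproj := proj_eq t 3 (by omega) X Y a hdvd
    have ha8 : ((a : ℤ) : ZMod (2^3)) = ((7:ℤ) : ZMod (2^3)) := by
      rw [ZMod.intCast_eq_intCast_iff]
      unfold Int.ModEq
      norm_num
      omega
    have key : ∀ u v : ZMod (2^3), u * v = 7 → u + v = 0 := by decide
    have h3 : ((7:ℤ) : ZMod (2^3)) = (7 : ZMod (2^3)) := by norm_num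
    have := key (X : ZMod (2^3)) (Y : ZMod (2^3)) (by rw [← h3, ← ha8]; push_cast at hproj ⊢; exact hproj)
    have h4 : ((X + Y : ℤ) : ZMod (2^3)) = (((0:ℕ)) : ZMod (2^3)) := by push_cast at this ⊢; exact this
    have := int_emod_of_zmod_eq 3 (X+Y) 0 h4
    norm_num at this ⊢
    omega
  · intro hs
    rw [Finset.mem_coe, mem_fibF] at hs
    have hs' : (s.val : ℤ) % 8 = 0 := by
      have : ((s.val % 2^3 : ℕ) : ℤ) = ((0:ℕ) : ℤ) := by exact_mod_cast hs
      push_cast at this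
      omega
    set Z : ℤ := (s.val : ℤ) with hZ
    obtain ⟨q, hq⟩ : ∃ q : ℤ, Z = 8*q := ⟨Z / 8, by omega⟩
    have hlift := lift_all a (-Z) 1 (by norm_num) 3 (by norm_num)
      ⟨1, -(4*q-1), ⟨0, by ring⟩, ⟨-2*q, by ring⟩, by rw [hq]; ring, by
        rw [hq, show ((2:ℤ)^3) = 8 from by norm_num]
        ring_nf
        omega⟩
      t (by omega)
    obtain ⟨x, hx, hdvd⟩ := hlift
    have := mem_T_of_sol a t Z x (by
      have e : x^2 - Z*x + a = x^2 + (-Z)*x + a := by ring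
      rw [e]; exact hdvd)
    rwa [cast_val_eq] at this

/-- backward helper for case 5 -/
lemma case5_back (t : ℕ) (ht : 5 ≤ t) (a Z c2 K : ℤ) (hZ : Z = 32*K + 2*c2)
    (hodd : Odd c2) (hc : (32:ℤ) ∣ (c2^2 - 4 - a)) :
    ((Z : ℤ) : ZMod (2^t)) ∈ T a (2^t) := by
  obtain ⟨A, hA⟩ := hc
  obtain ⟨m, hm⟩ := hodd
  have hlift := lift_all a (-Z) 2 (by norm_num) 5 (by norm_num)
    ⟨16*K + c2 + 2, 1, ⟨8*K + m + 1, by rw [hm]; ring⟩, ⟨0, by ring⟩, by rw [hZ]; ring, by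
      refine ⟨-(8*K^2 + c2*K + A), ?_⟩
      have : (16*K + c2 + 2:ℤ)^2 + (-Z)*(16*K + c2 + 2) + a
          = -(c2^2 - 4 - a) - 32*(8*K^2 + c2*K) := by rw [hZ]; ring
      rw [this, hA]
      norm_num
      ring⟩
    t (by omega)
  obtain ⟨x, hx, hdvd⟩ := hlift
  have := mem_T_of_sol a t Z x (by
    have e : x^2 - Z*x + a = x^2 + (-Z)*x + a := by ring
    rw [e]; exact hdvd)
  exact this

/-- Case a ≡ 5 mod 8: T is the union of two mod-32 fibers. -/
lemma T_eq_case5 (t : ℕ) (ht : 5 ≤ t) (a : ℤ) (ha : a % 8 = 5) :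
    ∃ c₁ c₂ : ℕ, c₁ < 32 ∧ c₂ < 32 ∧ c₁ ≠ c₂ ∧
      T a (2^t) = ↑(fibF t 5 c₁ ∪ fibF t 5 c₂) := by
  have ha32 : a % 32 = 5 ∨ a % 32 = 13 ∨ a % 32 = 21 ∨ a % 32 = 29 := by omega
  have main : ∀ c₁ c₂ : ℕ, c₁ < 32 → c₂ < 32 →
      (∀ u v : ZMod (2^5), u * v = ((a:ℤ) : ZMod (2^5)) → u + v = ((c₁:ℕ) : ZMod (2^5)) ∨ u + v = ((c₂:ℕ) : ZMod (2^5))) →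
      ((c₁:ℤ) % 4 = 2) → ((c₂:ℤ) % 4 = 2) →
      ((32:ℤ) ∣ (((c₁:ℤ)/2)^2 - 4 - a)) → ((32:ℤ) ∣ (((c₂:ℤ)/2)^2 - 4 - a)) →
      T a (2^t) = ↑(fibF t 5 c₁ ∪ fibF t 5 c₂) := by
    intro c₁ c₂ hc₁ hc₂ hkey hm₁ hm₂ hd₁ hd₂
    ext s
    constructor
    · intro hs
      obtain ⟨X, Y, hdvd, rfl⟩ := exists_int_of_mem_T a t s hs
      rw [Finset.mem_coe, Finset.mem_union, mem_fibF_int t 5 c₁ (by omega),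
        mem_fibF_int t 5 c₂ (by omega)]
      have hproj := proj_eq t 5 (by omega) X Y a hdvd
      have := hkey (X : ZMod (2^5)) (Y : ZMod (2^5)) (by push_cast at hproj ⊢; exact hproj)
      rcases this with h | h
      · left
        have h4 : ((X + Y : ℤ) : ZMod (2^5)) = ((c₁:ℕ) : ZMod (2^5)) := by push_cast at h ⊢; exact h
        have := int_emod_of_zmod_eq 5 (X+Y) c₁ h4
        norm_num at this ⊢
        omega
      · right
        have h4 : ((X + Y : ℤ) : ZMod (2^5)) = ((c₂:ℕ) : ZMod (2^5)) := by push_cast at h ⊢; exact h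
        have := int_emod_of_zmod_eq 5 (X+Y) c₂ h4
        norm_num at this ⊢
        omega
    · intro hs
      rw [Finset.mem_coe, Finset.mem_union, mem_fibF, mem_fibF] at hs
      have hsv : (s.val : ℤ) % 32 = c₁ ∨ (s.val : ℤ) % 32 = c₂ := by
        rcases hs with h | h
        · left
          have : ((s.val % 2^5 : ℕ) : ℤ) = ((c₁:ℕ) : ℤ) := by exact_mod_cast h
          push_cast at this
          omega
        · right
          have : ((s.val % 2^5 : ℕ) : ℤ) = ((c₂:ℕ) : ℤ) := by exact_mod_cast h
          push_cast at this
          omega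
      set Z : ℤ := (s.val : ℤ) with hZdef
      rcases hsv with h | h
      · obtain ⟨K, hK⟩ : ∃ K : ℤ, Z = 32*K + 2*((c₁:ℤ)/2) := ⟨Z / 32, by omega⟩
        have := case5_back t ht a Z ((c₁:ℤ)/2) K hK ⟨((c₁:ℤ)/2 - 1)/2, by omega⟩ hd₁
        rwa [cast_val_eq] at this
      · obtain ⟨K, hK⟩ : ∃ K : ℤ, Z = 32*K + 2*((c₂:ℤ)/2) := ⟨Z / 32, by omega⟩
        have := case5_back t ht a Z ((c₂:ℤ)/2) K hK ⟨((c₂:ℤ)/2 - 1)/2, by omega⟩ hd₂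
        rwa [cast_val_eq] at this
  have acast : ∀ w : ℤ, a % 32 = w → ((a:ℤ) : ZMod (2^5)) = ((w:ℤ) : ZMod (2^5)) := by
    intro w hw
    rw [ZMod.intCast_eq_intCast_iff]
    unfold Int.ModEq
    norm_num
    omega
  rcases ha32 with h | h | h | h
  · refine ⟨6, 26, by norm_num, by norm_num, by norm_num, main 6 26 (by norm_num) (by norm_num) ?_ (by norm_num) (by norm_num) (by norm_num; omega) (by norm_num; omega)⟩
    rw [acast 5 h]
    have : ((5:ℤ) : ZMod (2^5)) = (5 : ZMod (2^5)) := by norm_num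
    rw [this]
    have : ((6:ℕ) : ZMod (2^5)) = (6 : ZMod (2^5)) := by norm_num
    rw [this]
    have : ((26:ℕ) : ZMod (2^5)) = (26 : ZMod (2^5)) := by norm_num
    rw [this]
    decide
  · refine ⟨14, 18, by norm_num, by norm_num, by norm_num, main 14 18 (by norm_num) (by norm_num) ?_ (by norm_num) (by norm_num) (by norm_num; omega) (by norm_num; omega)⟩
    rw [acast 13 h]
    have : ((13:ℤ) : ZMod (2^5)) = (13 : ZMod (2^5)) := by norm_num
    rw [this]
    have : ((14:ℕ) : ZMod (2^5)) = (14 : ZMod (2^5)) := by norm_num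
    rw [this]
    have : ((18:ℕ) : ZMod (2^5)) = (18 : ZMod (2^5)) := by norm_num
    rw [this]
    decide
  · refine ⟨10, 22, by norm_num, by norm_num, by norm_num, main 10 22 (by norm_num) (by norm_num) ?_ (by norm_num) (by norm_num) (by norm_num; omega) (by norm_num; omega)⟩
    rw [acast 21 h]
    have : ((21:ℤ) : ZMod (2^5)) = (21 : ZMod (2^5)) := by norm_num
    rw [this]
    have : ((10:ℕ) : ZMod (2^5)) = (10 : ZMod (2^5)) := by norm_num
    rw [this]
    have : ((22:ℕ) : ZMod (2^5)) = (22 : ZMod (2^5)) := by norm_num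
    rw [this]
    decide
  · refine ⟨2, 30, by norm_num, by norm_num, by norm_num, main 2 30 (by norm_num) (by norm_num) ?_ (by norm_num) (by norm_num) (by norm_num; omega) (by norm_num; omega)⟩
    rw [acast 29 h]
    have : ((29:ℤ) : ZMod (2^5)) = (29 : ZMod (2^5)) := by norm_num
    rw [this]
    have : ((2:ℕ) : ZMod (2^5)) = (2 : ZMod (2^5)) := by norm_num
    rw [this]
    have : ((30:ℕ) : ZMod (2^5)) = (30 : ZMod (2^5)) := by norm_num
    rw [this]
    decide



def rr (γ : ℕ) : ℕ := if γ = 2 then 5 else 1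

def Dhalf (t : ℕ) : Finset (ZMod (2^t)) :=
  (fibF t t 2 ∪ fibF t t (2 + 2^(2*((t-1)/2)))) ∪
    (Finset.Icc 2 ((t-3)/2)).biUnion (fun γ => fibF t (2*γ+3) (2 + 2^(2*γ) * rr γ))

def DD (t : ℕ) : Finset (ZMod (2^t)) := Dhalf t ∪ (Dhalf t).image (fun s => -s)

lemma val_int (t : ℕ) {m c : ℕ} {s : ZMod (2^t)} (h : s.val % 2^m = c) :
    (s.val : ℤ) % (2^m : ℤ) = (c : ℤ) := by
  have : ((s.val % 2^m : ℕ) : ℤ) = (c : ℤ) := by exact_mod_cast h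
  push_cast at this
  exact this

lemma Dhalf_subset_T1 (t : ℕ) (ht : 5 ≤ t) : (Dhalf t : Set (ZMod (2^t))) ⊆ T 1 (2^t) := by
  intro s hs
  rw [Finset.mem_coe, Dhalf, Finset.mem_union, Finset.mem_union] at hs
  rcases hs with (h2 | hb) | hmain
  · -- s = 2
    rw [mem_fibF] at h2
    have hZ : (s.val : ℤ) = 2 := by
      have hlt := ZMod.val_lt (n := 2^t) s
      have := Nat.mod_eq_of_lt hlt
      omega
    have := mem_T_of_sol 1 t ((s.val : ℤ)) 1 (by rw [hZ]; norm_num)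
    rwa [cast_val_eq] at this
  · -- boundary element
    rw [mem_fibF] at hb
    set e := (t-1)/2 with he
    have hlt := ZMod.val_lt (n := 2^t) s
    have hcv : s.val = 2 + 2^(2*e) := by
      rwa [Nat.mod_eq_of_lt hlt] at hb
    have hZ : (s.val : ℤ) = 2 + 2^(2*e) := by rw [hcv]; push_cast; ring
    set B : ℤ := 2^(e-1) with hB
    have hBe : (2:ℤ)^(2*e) = 4*B^2 := by
      rw [hB, show 2*e = ((e-1)+(e-1))+2 from by omega, pow_add, pow_add]
      ring
    have key : (1 + 2*B^2 + 2*B)^2 - ((s.val:ℤ))*(1 + 2*B^2 + 2*B) + 1 = -(4*B^4) := by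
      rw [hZ, hBe]; ring
    have hdvd : (2^t : ℤ) ∣ (1 + 2*B^2 + 2*B)^2 - ((s.val:ℤ))*(1 + 2*B^2 + 2*B) + 1 := by
      rw [key]
      have h4B : (4:ℤ)*B^4 = 2^(4*(e-1)+2) := by
        rw [hB, ← pow_mul, pow_add]
        ring
      rw [h4B]
      exact dvd_neg.mpr (pow_dvd_pow 2 (by omega))
    have := mem_T_of_sol 1 t ((s.val : ℤ)) (1 + 2*B^2 + 2*B) hdvd
    rwa [cast_val_eq] at this
  · -- main layers
    rw [Finset.mem_biUnion] at hmain
    obtain ⟨γ, hγmem, hγ⟩ := hmain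
    rw [Finset.mem_Icc] at hγmem
    rw [mem_fibF] at hγ
    set R := rr γ with hR
    have hRval : (γ = 2 ∧ R = 5) ∨ (3 ≤ γ ∧ R = 1) := by
      rcases Nat.eq_or_lt_of_le hγmem.1 with h | h
      · left; constructor; omega
        rw [hR, rr, if_pos h.symm]
      · right; constructor; omega
        rw [hR, rr, if_neg (by omega)]
    set Z : ℤ := (s.val : ℤ) with hZdef
    have hmod : Z % (2^(2*γ+3) : ℤ) = ((2 + 2^(2*γ) * R : ℕ) : ℤ) := val_int t hγ
    have hmod' : Z % (2^(2*γ+3) : ℤ) = 2 + 2^(2*γ) * (R:ℤ) := by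
      rw [hmod]; push_cast; ring
    obtain ⟨q, hq⟩ : ∃ q : ℤ, Z = 2^(2*γ+3)*q + (2 + 2^(2*γ)*(R:ℤ)) := by
      have := Int.mul_ediv_add_emod Z (2^(2*γ+3))
      rw [hmod'] at this
      exact ⟨Z / 2^(2*γ+3), by linarith⟩
    set w : ℤ := (R:ℤ) + 8*q with hw
    have hZw : Z = 2 + 2^(2*γ)*w := by
      rw [hq, hw, show (2:ℤ)^(2*γ+3) = 2^(2*γ)*8 from by rw [pow_add]; ring]
      ring
    set C : ℤ := 2^(γ-2) with hC
    have hC1 : (2:ℤ)^γ = 4*C := by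
      rw [hC, show (4:ℤ) = 2^2 from by norm_num, ← pow_add]
      congr 1
      omega
    have hC2 : (2:ℤ)^(2*γ) = 16*C^2 := by
      rw [hC, ← pow_mul, show (16:ℤ) = 2^4 from by norm_num, ← pow_add]
      congr 1
      omega
    have hm8 : (8:ℤ) ∣ 1 - w - 4*C^2*w^2 := by
      rcases hRval with ⟨hγ2, hR5⟩ | ⟨hγ3, hR1⟩
      · have hCe : C = 1 := by rw [hC, hγ2]; norm_num
        rw [hCe, hw, hR5]
        push_cast
        exact ⟨-(32*q^2 + 41*q + 13), by ring⟩
      · obtain ⟨C', hC'⟩ : ∃ C' : ℤ, C = 2*C' := ⟨2^(γ-3), by rw [hC, show γ-2 = (γ-3)+1 from by omega, pow_succ]; ring⟩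
        rw [hC', hw, hR1]
        push_cast
        exact ⟨-(q + 2*C'^2*(1+8*q)^2), by ring⟩
    set x₀ : ℤ := 1 + 8*C^2*w + 4*C with hx₀
    have key : x₀^2 + (-Z)*x₀ + 1 = 16*C^2*(1 - w - 4*C^2*w^2) := by
      rw [hx₀, hZw, hC2]; ring
    have hbase : (2^(2*γ+3) : ℤ) ∣ x₀^2 + (-Z)*x₀ + 1 := by
      rw [key, show (2:ℤ)^(2*γ+3) = 16*C^2*8 from by rw [pow_add, hC2]; ring]
      exact mul_dvd_mul_left _ hm8
    have hlift := lift_all 1 (-Z) (γ+1) (by omega) (2*γ+3) (by omega)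
      ⟨x₀, 1, ⟨4*C^2*w + 2*C, by rw [hx₀]; ring⟩, ⟨0, by ring⟩, by
        rw [hx₀, hZw, hC2, show (2:ℤ)^(γ+1) = 8*C from by rw [pow_succ, hC1]; ring]
        ring, hbase⟩
      t (by omega)
    obtain ⟨x, hx, hdvd⟩ := hlift
    have := mem_T_of_sol 1 t Z x (by
      have e : x^2 - Z*x + 1 = x^2 + (-Z)*x + 1 := by ring
      rw [e]; exact hdvd)
    rwa [cast_val_eq] at this

lemma DD_subset_T1 (t : ℕ) (ht : 5 ≤ t) : (DD t : Set (ZMod (2^t))) ⊆ T 1 (2^t) := by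
  intro s hs
  rw [Finset.mem_coe, DD, Finset.mem_union] at hs
  rcases hs with h | h
  · exact Dhalf_subset_T1 t ht h
  · rw [Finset.mem_image] at h
    obtain ⟨s', hs', rfl⟩ := h
    exact T_neg 1 (2^t) s' (Dhalf_subset_T1 t ht hs')



lemma two_lt_pow (t : ℕ) (ht : 5 ≤ t) : (2:ℤ) < 2^t := by
  have : (2:ℤ)^5 ≤ 2^t := pow_le_pow_right₀ (by norm_num) ht
  norm_num at this
  linarith

/-- if p < q both < t, the sum 2^p g + 2^q h + 2^{p+q} g h (g odd) is not divisible by 2^t -/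
lemma pq_contra (t p q : ℕ) (g h : ℤ) (hg : Odd g) (hpq : p < q) (hpt : p < t)
    (hdvd : (2^t:ℤ) ∣ 2^p*g + 2^q*h + (2^p*g)*(2^q*h)) : False := by
  set O : ℤ := g + 2^(q-p)*h + 2^(q-p)*h*(2^p*g) with hO
  have hsplit : (2:ℤ)^q = 2^p * 2^(q-p) := by
    rw [← pow_add]; congr 1; omega
  have hexpr : 2^p*g + 2^q*h + (2^p*g)*(2^q*h) = 2^p * O := by
    rw [hO, hsplit]; ring
  rw [hexpr] at hdvd
  have h2 : (2:ℤ)^p * 2 ∣ 2^p * O := by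
    have : (2:ℤ)^(p+1) ∣ 2^t := pow_dvd_pow 2 (by omega)
    rw [pow_succ] at this
    exact dvd_trans this hdvd
  have hOdvd : (2:ℤ) ∣ O := (mul_dvd_mul_iff_left (a := (2:ℤ)^p) (by positivity)).mp h2
  have hOodd : Odd O := by
    obtain ⟨m, hm⟩ := hg
    refine ⟨m + 2^(q-p-1)*h + 2^(q-p-1)*h*(2^p*g), ?_⟩
    rw [hO, hm, show (2:ℤ)^(q-p) = 2*2^(q-p-1) from by rw [← pow_succ']; congr 1; omega]
    ring
  rcases hOodd with ⟨m, hm⟩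
  omega

/-- main half lemma: X ≡ 1 mod 4 implies X+Y lands in Dhalf -/
lemma half_lemma (t : ℕ) (ht : 5 ≤ t) (X Y : ℤ) (hX4 : X % 4 = 1)
    (hdvd : (2^t:ℤ) ∣ X*Y - 1) : (((X + Y : ℤ)) : ZMod (2^t)) ∈ Dhalf t := by
  have h2t : (2:ℤ) < 2^t := two_lt_pow t ht
  have h32 : (32:ℤ) ≤ 2^t := by
    have : (2:ℤ)^5 ≤ 2^t := pow_le_pow_right₀ (by norm_num) ht
    norm_num at this; linarith
  by_cases hc1 : (2^t:ℤ) ∣ X - 1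
  · -- s = 2
    have hcY : (2^t:ℤ) ∣ Y - 1 := by
      have e : Y - 1 = (X*Y - 1) - (X-1)*Y := by ring
      rw [e]
      exact dvd_sub hdvd (hc1.mul_right Y)
    rw [Dhalf, Finset.mem_union, Finset.mem_union]
    left; left
    rw [mem_fibF_int t t 2 le_rfl]
    refine emod_eq_of_dvd_sub ?_ (by norm_num) (by exact_mod_cast h2t)
    have e : X + Y - ((2:ℕ):ℤ) = (X-1) + (Y-1) := by push_cast; ring
    rw [e]
    exact dvd_add hc1 hcY
  · have hc1' : ¬ (2^t:ℤ) ∣ Y - 1 := by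
      intro hcY
      apply hc1
      have e : X - 1 = (X*Y - 1) - (Y-1)*X := by ring
      rw [e]
      exact dvd_sub hdvd (hcY.mul_right X)
    have hXne : X - 1 ≠ 0 := fun h => hc1 (h ▸ dvd_zero _)
    have hYne : Y - 1 ≠ 0 := fun h => hc1' (h ▸ dvd_zero _)
    obtain ⟨p, g, hg, hXg⟩ := int_two_adic (X-1) hXne
    obtain ⟨q, h, hh, hYh⟩ := int_two_adic (Y-1) hYne
    have e1 : X = 1 + 2^p*g := by linarith
    have e2 : Y = 1 + 2^q*h := by linarith
    have hY4 : Y % 4 = 1 := by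
      have h4 : (4:ℤ) ∣ X*Y - 1 := by
        have : (4:ℤ) = 2^2 := by norm_num
        rw [this]
        exact dvd_trans (pow_dvd_pow 2 (by omega)) hdvd
      have h4X : (4:ℤ) ∣ X - 1 := by omega
      obtain ⟨k1, hk1⟩ := h4
      obtain ⟨k2, hk2⟩ := h4X
      have : (4:ℤ) ∣ Y - 1 := ⟨k1 - k2*Y, by linear_combination hk1 - Y*hk2⟩
      omega
    have hX4' : (4:ℤ) ∣ X - 1 := by omega
    have hY4' : (4:ℤ) ∣ Y - 1 := by omega
    have hp2 : 2 ≤ p := by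
      rcases hg with ⟨m, hm⟩
      by_contra hcon
      push_neg at hcon
      interval_cases p
      · rw [hXg] at hX4'
        obtain ⟨k, hk⟩ := hX4'
        simp at hk
        omega
      · rw [hXg] at hX4'
        obtain ⟨k, hk⟩ := hX4'
        norm_num at hk
        omega
    have hq2 : 2 ≤ q := by
      rcases hh with ⟨m, hm⟩
      by_contra hcon
      push_neg at hcon
      interval_cases q
      · rw [hYh] at hY4'
        obtain ⟨k, hk⟩ := hY4'
        simp at hk
        omega
      · rw [hYh] at hY4'
        obtain ⟨k, hk⟩ := hY4'
        norm_num at hk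
        omega
    have hpt : p < t := by
      by_contra hcon
      push_neg at hcon
      exact hc1 (hXg ▸ Dvd.dvd.mul_right (pow_dvd_pow 2 hcon) g)
    have hqt : q < t := by
      by_contra hcon
      push_neg at hcon
      exact hc1' (hYh ▸ Dvd.dvd.mul_right (pow_dvd_pow 2 hcon) h)
    have hIdvd : (2^t:ℤ) ∣ 2^p*g + 2^q*h + (2^p*g)*(2^q*h) := by
      have e : 2^p*g + 2^q*h + (2^p*g)*(2^q*h) = X*Y - 1 := by rw [e1, e2]; ring
      rw [e]; exact hdvd
    have hpq : p = q := by
      rcases lt_trichotomy p q with hlt | heq | hgt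
      · exact absurd hIdvd (fun hd => pq_contra t p q g h hg hlt hpt hd)
      · exact heq
      · exfalso
        apply pq_contra t q p h g hh hgt hqt
        have e : 2^q*h + 2^p*g + (2^q*h)*(2^p*g) = 2^p*g + 2^q*h + (2^p*g)*(2^q*h) := by ring
        rw [e]; exact hIdvd
    subst hpq
    -- now E = g + h + 2^p g h, 2^{t-p} | E
    have hE : (2^t:ℤ) ∣ 2^p * (g + h + 2^p*(g*h)) := by
      have e : 2^p * (g + h + 2^p*(g*h)) = 2^p*g + 2^p*h + (2^p*g)*(2^p*h) := by ring
      rw [e]; exact hIdvd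
    have hEF : (2^(t-p):ℤ) ∣ (g + h + 2^p*(g*h)) := by
      have hsplit : (2:ℤ)^t = 2^p * 2^(t-p) := by rw [← pow_add]; congr 1; omega
      rw [hsplit] at hE
      exact (mul_dvd_mul_iff_left (a := (2:ℤ)^p) (by positivity)).mp hE
    obtain ⟨F, hF⟩ := hEF
    have hSig : X + Y - 2 = 2^t*F - 2^p*2^p*(g*h) := by
      have h1 : (2:ℤ)^t = 2^p*2^(t-p) := by rw [← pow_add]; congr 1; omega
      rw [e1, e2, h1]
      linear_combination ((2:ℤ)^p) * hF
    have hghodd : Odd (g*h) := hg.mul hh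
    by_cases h2pt : t ≤ 2*p
    · -- s = 2 again
      rw [Dhalf, Finset.mem_union, Finset.mem_union]
      left; left
      rw [mem_fibF_int t t 2 le_rfl]
      refine emod_eq_of_dvd_sub ?_ (by norm_num) (by exact_mod_cast h2t)
      have hsplit : (2:ℤ)^p*2^p = 2^t * 2^(2*p-t) := by
        rw [← pow_add, ← pow_add]; congr 1; omega
      refine ⟨F - 2^(2*p-t)*(g*h), ?_⟩
      push_cast
      linear_combination hSig - (g*h) * hsplit
    · push_neg at h2pt
      rcases (show 2*p ≤ t-3 ∨ 2*p = t-2 ∨ 2*p = t-1 by omega) with hsub | hsub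
      · -- main layer γ = p
        have hR : (8:ℤ) ∣ g*h + (rr p : ℤ) := by
          rcases (show p = 2 ∨ 3 ≤ p by omega) with hp | hp
          · subst hp
            have h32E : (32:ℤ) ∣ g + h + 4*(g*h) := by
              refine dvd_trans ?_ ⟨F, hF⟩
              have : (32:ℤ) = 2^5 := by norm_num
              rw [this]
              exact pow_dvd_pow 2 (by omega)
            have := gh_fact3 g h hg hghodd h32E
            rw [rr]
            norm_num
            omega
          · have h8gh : (8:ℤ) ∣ g + h := by
              have h8E : (8:ℤ) ∣ g + h + 2^p*(g*h) := by
                refine dvd_trans ?_ ⟨F, hF⟩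
                have : (8:ℤ) = 2^3 := by norm_num
                rw [this]
                exact pow_dvd_pow 2 (by omega)
              have h8p : (8:ℤ) ∣ 2^p*(g*h) := by
                have : (8:ℤ) = 2^3 := by norm_num
                rw [this]
                exact Dvd.dvd.mul_right (pow_dvd_pow 2 (by omega)) _
              omega
            have := gh_fact2 g h hg h8gh
            rw [rr, if_neg (by omega)]
            push_cast
            omega
        rw [Dhalf, Finset.mem_union]
        right
        rw [Finset.mem_biUnion]
        refine ⟨p, Finset.mem_Icc.mpr ⟨hp2, by omega⟩, ?_⟩
        rw [mem_fibF_int t (2*p+3) _ (by omega)]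
        have hRb : (rr p : ℤ) ≤ 5 := by rw [rr]; split <;> norm_num
        have hRnn : (0:ℤ) ≤ (rr p : ℤ) := by positivity
        have hpow4 : (4:ℤ) ≤ 2^(2*p) := by
          have : (2:ℤ)^2 ≤ 2^(2*p) := pow_le_pow_right₀ (by norm_num) (by omega)
          norm_num at this; linarith
        refine emod_eq_of_dvd_sub ?_ (by push_cast; positivity) ?_
        · have e : X + Y - ((2 + 2^(2*p) * rr p : ℕ):ℤ)
              = (X + Y - 2) - 2^(2*p)*(rr p : ℤ) := by push_cast; ring
          rw [e, hSig]
          have hsplit : (2:ℤ)^p*2^p = 2^(2*p) := by rw [← pow_add]; congr 1; omega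
          rw [hsplit]
          have e2' : 2^t*F - 2^(2*p)*(g*h) - 2^(2*p)*(rr p:ℤ)
              = 2^t*F - 2^(2*p)*((g*h) + (rr p:ℤ)) := by ring
          rw [e2']
          refine dvd_sub (Dvd.dvd.mul_right (pow_dvd_pow 2 (by omega)) F) ?_
          have hsplit2 : (2:ℤ)^(2*p+3) = 2^(2*p)*8 := by rw [pow_add]; norm_num
          rw [hsplit2]
          exact mul_dvd_mul_left _ hR
        · push_cast
          have : (2:ℤ)^(2*p+3) = 2^(2*p)*8 := by rw [pow_add]; norm_num
          rw [this]
          nlinarith [hpow4, hRb]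
      · -- boundary layers
        have hexp : 2*((t-1)/2) = 2*p := by omega
        have hd : (2:ℤ)^(t-2*p) ∣ g*h + 1 := by
          rcases hsub with hsub | hsub
          · -- t - 2p = 2 : т even
            have h4gh : (4:ℤ) ∣ g + h := by
              have h4E : (4:ℤ) ∣ g + h + 2^p*(g*h) := by
                refine dvd_trans ?_ ⟨F, hF⟩
                have : (4:ℤ) = 2^2 := by norm_num
                rw [this]
                exact pow_dvd_pow 2 (by omega)
              have h4p : (4:ℤ) ∣ 2^p*(g*h) := by
                have : (4:ℤ) = 2^2 := by norm_num
                rw [this]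
                exact Dvd.dvd.mul_right (pow_dvd_pow 2 (by omega)) _
              omega
            have := gh_fact1 g h hg h4gh
            have e : t - 2*p = 2 := by omega
            rw [e]
            norm_num
            exact this
          · have e : t - 2*p = 1 := by omega
            rw [e]
            rcases hghodd with ⟨m, hm⟩
            norm_num
            omega
        rw [Dhalf, Finset.mem_union, Finset.mem_union]
        left; right
        rw [mem_fibF_int t t _ le_rfl]
        have hple : (2:ℤ)^(2*p) * 4 ≤ 2^t ∧ (4:ℤ) ≤ 2^(2*p) ∨ (2:ℤ)^(2*p) * 2 ≤ 2^t ∧ (4:ℤ) ≤ 2^(2*p) := by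
          rcases hsub with hsub | hsub
          · left
            constructor
            · have : (2:ℤ)^(2*p)*4 = 2^(2*p+2) := by rw [pow_add]; norm_num
              rw [this]
              exact pow_le_pow_right₀ (by norm_num) (by omega)
            · have : (2:ℤ)^2 ≤ 2^(2*p) := pow_le_pow_right₀ (by norm_num) (by omega)
              norm_num at this; linarith
          · right
            constructor
            · have : (2:ℤ)^(2*p)*2 = 2^(2*p+1) := by rw [pow_add]; norm_num
              rw [this]
              exact pow_le_pow_right₀ (by norm_num) (by omega)
            · have : (2:ℤ)^2 ≤ 2^(2*p) := pow_le_pow_right₀ (by norm_num) (by omega)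
              norm_num at this; linarith
        refine emod_eq_of_dvd_sub ?_ (by push_cast; positivity) ?_
        · have e : X + Y - ((2 + 2^(2*((t-1)/2)) : ℕ):ℤ)
              = (X + Y - 2) - 2^(2*p) := by
            push_cast
            rw [hexp]
            push_cast
            ring
          rw [e, hSig]
          have hsplit : (2:ℤ)^p*2^p = 2^(2*p) := by rw [← pow_add]; congr 1; omega
          rw [hsplit]
          have e2' : 2^t*F - 2^(2*p)*(g*h) - 2^(2*p)
              = 2^t*F - 2^(2*p)*((g*h) + 1) := by ring
          rw [e2']
          refine dvd_sub (Dvd.dvd.mul_right dvd_rfl F) ?_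
          obtain ⟨J, hJ⟩ := hd
          refine ⟨J, ?_⟩
          rw [hJ, ← mul_assoc, ← pow_add]
          congr 2
          omega
        · push_cast
          rw [hexp]
          push_cast
          rcases hple with ⟨h1, h2⟩ | ⟨h1, h2⟩ <;> linarith

lemma T1_subset_DD (t : ℕ) (ht : 5 ≤ t) : T 1 (2^t) ⊆ (DD t : Set (ZMod (2^t))) := by
  intro s hs
  obtain ⟨X, Y, hdvd, rfl⟩ := exists_int_of_mem_T 1 t s hs
  have hXodd : Odd X := by
    have h2 : (2:ℤ) ∣ X*Y - 1 := dvd_trans (by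
      have : (2:ℤ) = 2^1 := by norm_num
      rw [this]
      exact pow_dvd_pow 2 (by omega)) hdvd
    obtain ⟨k, hk⟩ := h2
    have : Odd (X*Y) := ⟨k, by linarith⟩
    exact (Int.odd_mul.mp this).1
  have hX4 : X % 4 = 1 ∨ X % 4 = 3 := by
    rcases hXodd with ⟨m, hm⟩
    omega
  rw [DD, Finset.mem_coe, Finset.mem_union]
  rcases hX4 with h | h
  · left
    exact half_lemma t ht X Y h hdvd
  · right
    have hneg : (((-X) + (-Y) : ℤ) : ZMod (2^t)) ∈ Dhalf t := by
      apply half_lemma t ht (-X) (-Y) (by omega)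
      have e : (-X)*(-Y) - 1 = X*Y - 1 := by ring
      rw [e]; exact hdvd
    rw [Finset.mem_image]
    refine ⟨(((-X) + (-Y) : ℤ) : ZMod (2^t)), hneg, ?_⟩
    push_cast
    ring



lemma rr_cases (γ : ℕ) : rr γ = 1 ∨ rr γ = 5 := by
  rw [rr]; split <;> simp

lemma fib_disj_gen (t m₁ c₁ m₂ c₂ : ℕ) (hm : m₁ ≤ m₂)
    (hne : c₂ % 2^m₁ ≠ c₁) : Disjoint (fibF t m₁ c₁) (fibF t m₂ c₂) := by
  rw [Finset.disjoint_left]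
  intro s hs hs'
  rw [mem_fibF] at hs hs'
  apply hne
  rw [← hs', Nat.mod_mod_of_dvd _ (pow_dvd_pow 2 hm), hs]

lemma layer_c_lt (t γ : ℕ) : 2 + 2^(2*γ) * rr γ < 2^(2*γ+3) := by
  have h8 : (2:ℕ)^(2*γ+3) = 2^(2*γ)*8 := by rw [pow_add]; norm_num
  have hA : 1 ≤ (2:ℕ)^(2*γ) := Nat.one_le_two_pow
  rcases rr_cases γ with h | h <;> rw [h, h8] <;> nlinarith [hA]

lemma mod_high (m i r : ℕ) (hmi : m ≤ i) : (2 + 2^i*r) % 2^m = 2 % 2^m := by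
  rw [show (2:ℕ)^i*r = 2^m*(2^(i-m)*r) from by rw [← mul_assoc, ← pow_add]; congr 2; omega,
    Nat.add_mul_mod_self_left]

lemma layers_disj (t : ℕ) (ht : 5 ≤ t) : ∀ γ ∈ Finset.Icc 2 ((t-3)/2), ∀ γ' ∈ Finset.Icc 2 ((t-3)/2),
    γ ≠ γ' → Disjoint (fibF t (2*γ+3) (2 + 2^(2*γ) * rr γ)) (fibF t (2*γ'+3) (2 + 2^(2*γ') * rr γ')) := by
  have key : ∀ γ γ' : ℕ, 2 ≤ γ → γ < γ' →
      Disjoint (fibF t (2*γ+3) (2 + 2^(2*γ) * rr γ)) (fibF t (2*γ'+3) (2 + 2^(2*γ') * rr γ')) := by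
    intro γ γ' hγ2 hlt
    apply fib_disj_gen t _ _ _ _ (by omega)
    have hA8 : (8:ℕ) ≤ 2^(2*γ) := by
      calc (8:ℕ) = 2^3 := by norm_num
      _ ≤ 2^(2*γ) := Nat.pow_le_pow_right (by norm_num) (by omega)
    rcases (show 2*γ+3 ≤ 2*γ' ∨ 2*γ' = 2*γ+2 by omega) with hc | hc
    · rw [mod_high (2*γ+3) (2*γ') (rr γ') hc]
      have h2 : (2:ℕ) % 2^(2*γ+3) = 2 := Nat.mod_eq_of_lt (by
        calc (2:ℕ) < 2^5 := by norm_num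
        _ ≤ 2^(2*γ+3) := Nat.pow_le_pow_right (by norm_num) (by omega))
      rcases rr_cases γ with h | h <;> rw [h2, h] <;> nlinarith [hA8]
    · have he2 : (2:ℕ)^(2*γ') = 2^(2*γ)*4 := by
        rw [hc, pow_add]; norm_num
      have he3 : (2:ℕ)^(2*γ+3) = 2^(2*γ)*8 := by rw [pow_add]; norm_num
      have hr' := rr_cases γ'
      have hmod : (2 + 2^(2*γ')*rr γ') % 2^(2*γ+3) = 2 + 2^(2*γ)*4 := by
        rcases hr' with h | h
        · rw [h, he2, he3, mul_one]
          apply Nat.mod_eq_of_lt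
          omega
        · rw [h, he2, he3, show 2 + 2^(2*γ)*4*5 = (2 + 2^(2*γ)*4) + (2^(2*γ)*8)*2 from by ring,
            Nat.add_mul_mod_self_left]
          apply Nat.mod_eq_of_lt
          omega
      rw [hmod]
      rcases rr_cases γ with h | h <;> rw [h] <;> omega
  intro γ hγ γ' hγ' hne
  rw [Finset.mem_Icc] at hγ hγ'
  rcases lt_or_gt_of_ne hne with h | h
  · exact key γ γ' hγ.1 h
  · exact (key γ' γ hγ'.1 h).symm

lemma Dhalf_card (t : ℕ) (ht : 5 ≤ t) :
    (Dhalf t).card = 2 + ∑ γ ∈ Finset.Icc 2 ((t-3)/2), 2^(t-(2*γ+3)) := by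
  have hsing : ∀ c : ℕ, c < 2^t → (fibF t t c).card = 1 := by
    intro c hc
    rw [fibF_card t t c le_rfl hc]
    simp
  have hc2 : (2:ℕ) < 2^t := by
    calc (2:ℕ) < 2^5 := by norm_num
    _ ≤ 2^t := Nat.pow_le_pow_right (by norm_num) ht
  have hcb : 2 + 2^(2*((t-1)/2)) < 2^t := by
    have h1 : (2:ℕ)^(2*((t-1)/2)) ≤ 2^(t-1) := Nat.pow_le_pow_right (by norm_num) (by omega)
    have h2 : (2:ℕ)^t = 2^(t-1)*2 := by rw [← pow_succ]; congr 1; omega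
    have h3 : (4:ℕ) ≤ 2^(t-1) := by
      calc (4:ℕ) = 2^2 := by norm_num
      _ ≤ 2^(t-1) := Nat.pow_le_pow_right (by norm_num) (by omega)
    omega
  have hd1 : Disjoint (fibF t t 2) (fibF t t (2 + 2^(2*((t-1)/2)))) := by
    apply fib_disj_gen t t _ t _ le_rfl
    rw [Nat.mod_eq_of_lt hcb]
    have : 1 ≤ (2:ℕ)^(2*((t-1)/2)) := Nat.one_le_two_pow
    omega
  have hd2 : Disjoint ((fibF t t 2 ∪ fibF t t (2 + 2^(2*((t-1)/2)))))
      ((Finset.Icc 2 ((t-3)/2)).biUnion (fun γ => fibF t (2*γ+3) (2 + 2^(2*γ) * rr γ))) := by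
    rw [Finset.disjoint_biUnion_right]
    intro γ hγ
    rw [Finset.mem_Icc] at hγ
    have hA8 : (8:ℕ) ≤ 2^(2*γ) := by
      calc (8:ℕ) = 2^3 := by norm_num
      _ ≤ 2^(2*γ) := Nat.pow_le_pow_right (by norm_num) (by omega)
    rw [Finset.disjoint_union_left]
    constructor
    · refine ((fib_disj_gen t (2*γ+3) _ t 2 (by omega) ?_).symm)
      rw [Nat.mod_eq_of_lt (by
        calc (2:ℕ) < 2^5 := by norm_num
        _ ≤ 2^(2*γ+3) := Nat.pow_le_pow_right (by norm_num) (by omega))]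
      rcases rr_cases γ with h | h <;> rw [h] <;> nlinarith [hA8]
    · refine ((fib_disj_gen t (2*γ+3) _ t _ (by omega) ?_).symm)
      rcases (show 2*γ+3 ≤ 2*((t-1)/2) ∨ 2*((t-1)/2) = 2*γ+2 by omega) with hc | hc
      · rw [show (2:ℕ) + 2^(2*((t-1)/2)) = 2 + 2^(2*((t-1)/2))*1 from by ring,
          mod_high (2*γ+3) _ 1 hc]
        rw [Nat.mod_eq_of_lt (by
          calc (2:ℕ) < 2^5 := by norm_num
          _ ≤ 2^(2*γ+3) := Nat.pow_le_pow_right (by norm_num) (by omega))]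
        rcases rr_cases γ with h | h <;> rw [h] <;> nlinarith [hA8]
      · have he2 : (2:ℕ)^(2*((t-1)/2)) = 2^(2*γ)*4 := by rw [hc, pow_add]; norm_num
        have he3 : (2:ℕ)^(2*γ+3) = 2^(2*γ)*8 := by rw [pow_add]; norm_num
        rw [he2, Nat.mod_eq_of_lt (by rw [he3]; omega)]
        rcases rr_cases γ with h | h <;> rw [h] <;> omega
  rw [Dhalf, Finset.card_union_of_disjoint hd2, Finset.card_union_of_disjoint hd1,
    hsing 2 hc2, hsing _ hcb, Finset.card_biUnion (layers_disj t ht)]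
  congr 1
  apply Finset.sum_congr rfl
  intro γ hγ
  rw [Finset.mem_Icc] at hγ
  exact fibF_card t (2*γ+3) _ (by omega) (layer_c_lt t γ)

lemma mem_Dhalf_val8 (t : ℕ) (ht : 5 ≤ t) (s : ZMod (2^t)) (hs : s ∈ Dhalf t) :
    s.val % 8 = 2 := by
  haveI : NeZero (2 ^ t) := ⟨by positivity⟩
  rw [Dhalf, Finset.mem_union, Finset.mem_union] at hs
  have hlt := ZMod.val_lt (n := 2^t) s
  rcases hs with (h | h) | h
  · rw [mem_fibF, Nat.mod_eq_of_lt hlt] at h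
    omega
  · rw [mem_fibF, Nat.mod_eq_of_lt hlt] at h
    have he : (2:ℕ)^(2*((t-1)/2)) = 8*2^(2*((t-1)/2)-3) := by
      rw [show (8:ℕ) = 2^3 from by norm_num, ← pow_add]
      congr 1
      omega
    omega
  · rw [Finset.mem_biUnion] at h
    obtain ⟨γ, hγ, hmem⟩ := h
    rw [Finset.mem_Icc] at hγ
    rw [mem_fibF] at hmem
    have h8 : s.val % 8 = (2 + 2^(2*γ)*rr γ) % 8 := by
      rw [← hmem]
      rw [Nat.mod_mod_of_dvd _ (by
        rw [show (8:ℕ) = 2^3 from by norm_num]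
        exact pow_dvd_pow 2 (by omega))]
    have he : (2:ℕ)^(2*γ)*rr γ = 8*(2^(2*γ-3)*rr γ) := by
      rw [show (8:ℕ) = 2^3 from by norm_num, ← mul_assoc, ← pow_add]
      congr 2
      omega
    omega

lemma DD_card (t : ℕ) (ht : 5 ≤ t) :
    (DD t).card = 2 * (2 + ∑ γ ∈ Finset.Icc 2 ((t-3)/2), 2^(t-(2*γ+3))) := by
  haveI : NeZero (2 ^ t) := ⟨by positivity⟩
  have hdisj : Disjoint (Dhalf t) ((Dhalf t).image (fun s => -s)) := by
    rw [Finset.disjoint_left]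
    intro s hs hs'
    rw [Finset.mem_image] at hs'
    obtain ⟨s', hs'1, hs'2⟩ := hs'
    have h1 := mem_Dhalf_val8 t ht s hs
    have h2 := mem_Dhalf_val8 t ht s' hs'1
    have hne : s' ≠ 0 := by
      intro h0
      rw [h0] at h2
      simp [ZMod.val_zero] at h2
    have h3 : s.val = 2^t - s'.val := by
      rw [← hs'2, ZMod.neg_val, if_neg hne]
    have h4 : (2:ℕ)^t = 8*2^(t-3) := by
      rw [show (8:ℕ) = 2^3 from by norm_num, ← pow_add]
      congr 1
      omega
    have h5 : 0 < s'.val := by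
      rcases Nat.eq_zero_or_pos s'.val with h | h
      · exfalso; exact hne (by rwa [← ZMod.val_eq_zero])
      · exact h
    have hlt := ZMod.val_lt (n := 2^t) s'
    omega
  rw [DD, Finset.card_union_of_disjoint hdisj,
    Finset.card_image_of_injective _ neg_injective, Dhalf_card t ht]
  ring

/-- the rational geometric sum -/
lemma sumQ (t : ℕ) (ht : 5 ≤ t) :
    (6:ℚ) * (∑ γ ∈ Finset.Icc 2 ((t-3)/2), (2:ℚ)^(t-(2*γ+3)))
      = 2^(t-4) + (-1:ℚ)^(t-1) - 3 := by
  induction t using Nat.strong_induction_on with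
  | _ t ih =>
    rcases (show t = 5 ∨ t = 6 ∨ 7 ≤ t by omega) with rfl | rfl | h7
    · norm_num [show (5-3)/2 = 1 from by norm_num, Finset.Icc_eq_empty_of_lt]
    · norm_num [show (6-3)/2 = 1 from by norm_num, Finset.Icc_eq_empty_of_lt]
    · have hG : 2 ≤ (t-3)/2 := by omega
      have hsplit : Finset.Icc 2 ((t-3)/2) = insert 2 (Finset.Icc 3 ((t-3)/2)) := by
        ext x
        simp [Finset.mem_Icc, Finset.mem_insert]
        omega
      have hmap : Finset.Icc 3 ((t-3)/2) = Finset.map (addRightEmbedding 1) (Finset.Icc 2 ((t-3)/2 - 1)) := by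
        rw [Finset.map_add_right_Icc]
        congr 1 <;> omega
      have hre : ∑ γ ∈ Finset.Icc 3 ((t-3)/2), (2:ℚ)^(t-(2*γ+3))
          = ∑ γ ∈ Finset.Icc 2 ((t-2-3)/2), (2:ℚ)^((t-2)-(2*γ+3)) := by
        rw [hmap, Finset.sum_map]
        apply Finset.sum_congr (by congr 1; omega)
        intro γ hγ
        rw [Finset.mem_Icc] at hγ
        congr 1
        simp only [addRightEmbedding_apply]
        omega
      rw [hsplit, Finset.sum_insert (by simp [Finset.mem_Icc]), hre, mul_add,
        ih (t-2) (by omega) (by omega)]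
      have e1 : t - (2*2+3) = t - 7 := by norm_num
      have e2 : (2:ℚ)^(t-4) = 2^(t-7)*8 := by
        rw [show (8:ℚ) = 2^3 from by norm_num, ← pow_add]
        congr 1
        omega
      have e3 : (2:ℚ)^(t-2-4) = 2^(t-7)*2 := by
        rw [show (2:ℚ)^(t-7)*2 = 2^(t-7)*2^1 from by norm_num, ← pow_add]
        congr 1
        omega
      have e4 : (-1:ℚ)^(t-2-1) = (-1:ℚ)^(t-1) := by
        rw [show t-1 = (t-2-1)+2 from by omega, pow_add]
        norm_num
      rw [e1, e2, e3, e4]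
      ring



lemma mul_cast_inj (t : ℕ) (b : ℤ) (hb : Odd b) :
    Function.Injective (fun z : ZMod (2^t) => ((b:ℤ) : ZMod (2^t)) * z) := by
  obtain ⟨u, hu⟩ := isUnit_intCast_of_odd (n := t) b hb
  intro z w hzw
  simp only [← hu] at hzw
  calc z = (↑u⁻¹ : ZMod (2^t)) * ((↑u : ZMod (2^t)) * z) := by
        rw [← mul_assoc, Units.inv_mul, one_mul]
    _ = (↑u⁻¹ : ZMod (2^t)) * ((↑u : ZMod (2^t)) * w) := by rw [hzw]
    _ = w := by rw [← mul_assoc, Units.inv_mul, one_mul]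

end Stmt6

open Stmt6 in
theorem stmt6 (t : ℕ) (ht : 5 ≤ t) (a : ℤ) (ha : Odd a) :
    (a % 8 = 1 → ((coordSumset a (2 ^ t)).ncard : ℚ) =
      (2 : ℚ) ^ (t - 4) / 3 + (-1 : ℚ) ^ (t - 1) / 3 + 3) ∧
    (a % 8 = 3 ∨ a % 8 = 7 → ((coordSumset a (2 ^ t)).ncard : ℚ) = (2 : ℚ) ^ (t - 3)) ∧
    (a % 8 = 5 → ((coordSumset a (2 ^ t)).ncard : ℚ) = (2 : ℚ) ^ (t - 4)) := by
  rw [coordSumset_eq a t (by omega) ha]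
  refine ⟨?_, ?_, ?_⟩
  · -- case a ≡ 1 mod 8
    intro h1
    obtain ⟨b, hb, hdvd⟩ := exists_sqrt t ht a h1
    rw [T_eq_image t a b hb hdvd,
      Set.ncard_image_of_injective _ (mul_cast_inj t b hb),
      Set.Subset.antisymm (T1_subset_DD t ht) (DD_subset_T1 t ht),
      Set.ncard_coe_finset, DD_card t ht]
    have hq := sumQ t ht
    push_cast
    linear_combination (1/3 : ℚ) * hq
  · -- case a ≡ 3 or 7 mod 8
    intro h37
    have key : ∃ c : ℕ, c < 2^3 ∧ T a (2^t) = ↑(fibF t 3 c) := by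
      rcases h37 with h | h
      · exact ⟨4, by norm_num, T_eq_case3 t ht a h⟩
      · exact ⟨0, by norm_num, T_eq_case7 t ht a h⟩
    obtain ⟨c, hc, hT⟩ := key
    rw [hT, Set.ncard_coe_finset, fibF_card t 3 c (by omega) hc]
    push_cast
    ring
  · -- case a ≡ 5 mod 8
    intro h5
    obtain ⟨c₁, c₂, hc₁, hc₂, hne, hT⟩ := T_eq_case5 t ht a h5
    have hdisj : Disjoint (fibF t 5 c₁) (fibF t 5 c₂) := by
      apply fib_disj_gen t 5 c₁ 5 c₂ le_rfl
      rw [Nat.mod_eq_of_lt (by norm_num; omega)]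
      omega
    rw [hT, Set.ncard_coe_finset, Finset.card_union_of_disjoint hdisj,
      fibF_card t 5 c₁ (by omega) (by norm_num; omega),
      fibF_card t 5 c₂ (by omega) (by norm_num; omega)]
    push_cast
    rw [show (2:ℚ)^(t-5) + 2^(t-5) = 2^(t-5)*2^1 from by ring, ← pow_add,
      show t-5+1 = t-4 from by omega]
end

section
/- Let p be an odd prime, t ≥ 1, and let a be an integer with gcd(a,p) = 1. If the Legendre symbol (a/p) = −1, then #S''_2(a;p^t) = 0. If (a/p) = 1, then #S''_2(a;p^t) = p^{t−1}/(p+1) + 3/2 + (−1)^{t−1}(p−1)/(2(p+1)). -/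
/-- `S''_2(a;p^t)`: residues `k mod p^t` with `k² - a` a square mod `p^t` and `p ∣ (k² - a)`. -/
def S2'' (a : ℤ) (p t : ℕ) : Set (ZMod (p ^ t)) :=
  {s | ∃ k : ℤ, s = (k : ZMod (p ^ t)) ∧ IsSquareMod (k ^ 2 - a) (p ^ t) ∧
    (p : ℤ) ∣ (k ^ 2 - a)}

/-!
If `p ∤ w` and `e < t`, then `p^e w` is a square mod `p^t` iff `e` is even and `(w/p) = 1`:
a factor `p²` can be stripped off both sides of `x² ≡ p^e w`, a single factor `p` cannot occur,
and a quadratic residue lifts to a square root mod every `p^t` by Hensel's lemma.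
So for `(a/p) = 1` the residues `k mod p^t` with `p ∣ k² - a` and `k² - a` a square are those with
`k² ≡ a (mod p^t)`, together with, for each even `1 ≤ e < t` and each nonzero square `c mod p`,
those with `k² ≡ a + p^e c (mod p^(e+1))`. Each right-hand side is again a quadratic residue,
with exactly the two square roots `±x` mod `p^j` (`p` is odd), hence `2 p^(t-j)` of them mod
`p^t`. This gives `2 + ∑ (p - 1) p^(t-e-1)` over even `1 ≤ e < t`, a geometric sum.
If `(a/p) = -1`, then `p ∣ k² - a` is already impossible.
-/

open Finset

theorem Nat.count_mul_of_periodic {P : ℕ → Prop} [DecidablePred P] {N : ℕ}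
    (hP : Function.Periodic P N) (m : ℕ) : Nat.count P (m * N) = m * Nat.count P N := by
  induction m with
  | zero => simp
  | succ m ih =>
    have hshift : (fun k => P (m * N + k)) = P := funext fun k => by
      rw [add_comm]; exact hP.nat_mul m k
    rw [Nat.succ_mul, Nat.count_add, ih, Nat.succ_mul]
    simp only [hshift]

theorem ncard_setOf_intCast_of_periodic {N : ℕ} [NeZero N] {P : ℤ → Prop} [DecidablePred P]
    (hP : Function.Periodic P N) :
    {s : ZMod N | ∃ k : ℤ, s = k ∧ P k}.ncard = Nat.count (fun n : ℕ => P n) N := by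
  have hres : ∀ k : ℤ, P ((k : ZMod N).val) ↔ P k := fun k => by
    rw [ZMod.val_intCast, Int.emod_def, mul_comm]
    simpa using hP.sub_int_mul_eq (x := k) (k / N)
  have hset : {s : ZMod N | ∃ k : ℤ, s = k ∧ P k} =
      (fun n : ℕ => (n : ZMod N)) '' ↑{n ∈ range N | P (n : ℕ)} := by
    ext s
    simp only [Set.mem_ofPred_eq, coe_filter, mem_range, Set.mem_image]
    constructor
    · rintro ⟨k, rfl, hk⟩
      exact ⟨_, ⟨ZMod.val_lt _, (hres k).mpr hk⟩, ZMod.natCast_zmod_val _⟩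
    · rintro ⟨n, ⟨-, hn⟩, rfl⟩
      exact ⟨n, by push_cast; rfl, hn⟩
  rw [hset, Set.InjOn.ncard_image, Set.ncard_coe_finset, Nat.count_eq_card_filter_range]
  intro m hm n hn h
  simp only [coe_filter, mem_range, Set.mem_ofPred_eq] at hm hn
  simpa [ZMod.val_natCast_of_lt hm.1, ZMod.val_natCast_of_lt hn.1] using congrArg ZMod.val h

theorem two_mul_card_quadraticChar_eq_one {F : Type*} [Field F] [Fintype F] [DecidableEq F]
    (hF : ringChar F ≠ 2) :
    2 * #{x : F | quadraticChar F x = 1} = Fintype.card F - 1 := by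
  have hvals : ∀ x : F, (quadraticChar F x = 1 ∨ quadraticChar F x = -1) ↔ x ≠ 0 := fun x => by
    refine ⟨?_, quadraticChar_dichotomy⟩
    rintro h rfl
    simp at h
  have hdiff : (#{x : F | quadraticChar F x = 1} : ℤ) - #{x : F | quadraticChar F x = -1} = 0 := by
    rw [← quadraticChar_sum_zero hF, ← sum_boole, ← sum_boole, ← sum_sub_distrib]
    refine sum_congr rfl fun x _ => ?_
    rcases eq_or_ne x 0 with rfl | hx
    · simp
    · rcases quadraticChar_dichotomy hx with h | h <;> simp [h]
  have hsum : #{x : F | quadraticChar F x = 1} + #{x : F | quadraticChar F x = -1} =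
      Fintype.card F - 1 := by
    rw [← card_union_of_disjoint (disjoint_filter.mpr fun x _ h1 h2 => by simp [h1] at h2),
      ← filter_or]
    simp only [hvals, filter_ne', card_erase_of_mem (mem_univ _), card_univ]
  omega

theorem sum_Ico_even_succ (p : ℕ) {t : ℕ} (ht : t ≠ 0) :
    ∑ e ∈ Ico 1 (t + 1) with Even e, (p - 1) * p ^ (t + 1 - e - 1) =
      p * ∑ e ∈ Ico 1 t with Even e, (p - 1) * p ^ (t - e - 1) + if Even t then p - 1 else 0 := by
  have hterm : ∀ e ∈ {e ∈ Ico 1 t | Even e},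
      (p - 1) * p ^ (t + 1 - e - 1) = p * ((p - 1) * p ^ (t - e - 1)) := fun e he => by
    have het := (mem_Ico.mp (mem_filter.mp he).1).2
    rw [show t + 1 - e - 1 = t - e - 1 + 1 by omega, pow_succ]
    ring
  rw [Nat.Ico_succ_right_eq_insert_Ico (by omega), filter_insert, mul_sum]
  split_ifs with heven
  · rw [sum_insert (by simp), sum_congr rfl hterm, add_comm]
    simp
  · rw [sum_congr rfl hterm, add_zero]

theorem cast_two_add_sum_Ico_even {p : ℕ} (hp : 1 ≤ p) {t : ℕ} (ht : t ≠ 0) :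
    ((2 + ∑ e ∈ Ico 1 t with Even e, (p - 1) * p ^ (t - e - 1) : ℕ) : ℚ) =
      (p : ℚ) ^ (t - 1) / ((p : ℚ) + 1) + 3 / 2 +
        (-1 : ℚ) ^ (t - 1) * ((p : ℚ) - 1) / (2 * ((p : ℚ) + 1)) := by
  obtain ⟨s, rfl⟩ := Nat.exists_eq_add_one_of_ne_zero ht
  have hp1 : (p : ℚ) + 1 ≠ 0 := by positivity
  induction s with
  | zero =>
    rw [Ico_self, filter_empty, sum_empty]
    norm_num
    field_simp
    ring
  | succ s ih =>
    rw [sum_Ico_even_succ p (by omega)]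
    have hrec := ih (by omega)
    push_cast [Nat.cast_sub hp] at hrec ⊢
    rw [eq_sub_of_add_eq' hrec, pow_succ (-1 : ℚ) s]
    rcases Nat.even_or_odd s with h | h
    · rw [if_neg (Nat.not_even_iff_odd.mpr h.add_one), h.neg_one_pow]
      field_simp
      ring
    · rw [if_pos h.add_one, h.neg_one_pow]
      field_simp
      ring

theorem Int.sub_modEq_iff_modEq_add {a b c n : ℤ} : a - b ≡ c [ZMOD n] ↔ a ≡ b + c [ZMOD n] :=
  ⟨fun h => by simpa using h.add_left b, fun h => by simpa using h.sub_right b⟩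

theorem isSquareMod_congr {u v : ℤ} {N : ℕ} (h : u ≡ v [ZMOD N]) :
    IsSquareMod u N ↔ IsSquareMod v N :=
  exists_congr fun _ => ⟨fun hx => hx.trans h, fun hx => hx.trans h.symm⟩

theorem exists_sq_modEq_pow_succ_succ {q b x : ℤ} {j : ℕ} (hx : IsCoprime (2 * x) q)
    (h : x ^ 2 ≡ b [ZMOD q ^ (j + 1)]) : ∃ y, y ^ 2 ≡ b [ZMOD q ^ (j + 2)] := by
  obtain ⟨u, v, huv⟩ := hx
  obtain ⟨c, hc⟩ := h.dvd
  -- Newton step: `2 x u ≡ 1 (mod q)`, so `x + q^(j+1) u c` kills the error term `q^(j+1) c`.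
  refine ⟨x + q ^ (j + 1) * u * c, (Int.modEq_iff_dvd.mpr ⟨c * v - q ^ j * u ^ 2 * c ^ 2, ?_⟩)⟩
  linear_combination hc - q ^ (j + 1) * c * huv

theorem modEq_or_modEq_neg_of_sq_modEq_sq {q x y : ℤ} (hq : Prime q) (hx : IsCoprime (2 * x) q)
    {j : ℕ} (h : x ^ 2 ≡ y ^ 2 [ZMOD q ^ j]) : x ≡ y [ZMOD q ^ j] ∨ x ≡ -y [ZMOD q ^ j] := by
  simp only [Int.modEq_iff_dvd] at h ⊢
  have hprod : q ^ j ∣ (y - x) * (-y - x) := by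
    rw [show (y - x) * (-y - x) = -(y ^ 2 - x ^ 2) by ring]
    exact h.neg_right
  have hboth : ¬ (q ∣ y - x ∧ q ∣ -y - x) := fun ⟨h₁, h₂⟩ =>
    hq.not_isUnit (hx.isUnit_of_dvd' (by simpa [two_mul] using (dvd_add h₁ h₂).neg_right) dvd_rfl)
  by_cases hd : q ∣ y - x
  · exact .inl (((hq.coprime_iff_not_dvd.mpr fun h' => hboth ⟨hd, h'⟩).pow_left).dvd_of_dvd_mul_left
      (mul_comm (y - x) _ ▸ hprod))
  · exact .inr (((hq.coprime_iff_not_dvd.mpr hd).pow_left).dvd_of_dvd_mul_left hprod)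

def sqRoots (p t j : ℕ) (b : ℤ) : Finset ℕ :=
  (range (p ^ t)).filter fun n : ℕ => (n : ℤ) ^ 2 ≡ b [ZMOD p ^ j]

-- `(e, c)` stands for the residues `k` with `k² - a ≡ p^e c (mod p^(e+1))`.
def squareStrata (p t : ℕ) [Fact p.Prime] : Finset (ℕ × ZMod p) :=
  {e ∈ Ico 1 t | Even e} ×ˢ ({c | quadraticChar (ZMod p) c = 1} : Finset (ZMod p))

section PrimePower

variable {p : ℕ} [hp : Fact p.Prime]

theorem not_dvd_of_legendreSym_eq_one {b : ℤ} (hb : legendreSym p b = 1) : ¬ (p : ℤ) ∣ b :=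
  fun h => by
    rw [(legendreSym.eq_zero_iff p b).mpr ((ZMod.intCast_zmod_eq_zero_iff_dvd b p).mpr h)] at hb
    exact zero_ne_one hb

theorem legendreSym_ne_neg_one_of_dvd_sq_sub {a k : ℤ} (h : (p : ℤ) ∣ k ^ 2 - a) :
    legendreSym p a ≠ -1 := by
  rw [Ne, legendreSym.eq_neg_one_iff, not_not]
  refine ⟨k, ?_⟩
  rw [← ZMod.intCast_zmod_eq_zero_iff_dvd] at h
  push_cast at h
  linear_combination -h

theorem legendreSym_add_prime_pow_mul (a c : ℤ) {e : ℕ} (he : e ≠ 0) :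
    legendreSym p (a + p ^ e * c) = legendreSym p a := by
  obtain ⟨e, rfl⟩ := Nat.exists_eq_succ_of_ne_zero he
  rw [legendreSym.mod, pow_succ', mul_assoc, Int.add_mul_emod_self_left, ← legendreSym.mod]

theorem isCoprime_two_mul_of_sq_modEq (hp2 : p ≠ 2) {b x : ℤ} (hb : ¬ (p : ℤ) ∣ b)
    (h : x ^ 2 ≡ b [ZMOD p]) : IsCoprime (2 * x) p := by
  have hprime := Nat.prime_iff_prime_int.mp hp.out
  refine (hprime.coprime_iff_not_dvd.mpr fun hdvd => ?_).symm
  rcases hprime.dvd_or_dvd hdvd with h2 | hx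
  · exact hp2 ((Nat.prime_dvd_prime_iff_eq hp.out Nat.prime_two).mp (by exact_mod_cast h2))
  · exact hb (by simpa using dvd_add h.dvd (dvd_pow hx two_ne_zero))

theorem isSquareMod_prime_pow_of_legendreSym_eq_one (hp2 : p ≠ 2) {b : ℤ}
    (hb : legendreSym p b = 1) : ∀ j, IsSquareMod b (p ^ j)
  | 0 => ⟨0, by simp [Int.modEq_one]⟩
  | 1 => by
    have hb0 : (b : ZMod p) ≠ 0 := by
      rw [Ne, ZMod.intCast_zmod_eq_zero_iff_dvd]; exact not_dvd_of_legendreSym_eq_one hb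
    obtain ⟨r, hr⟩ := (legendreSym.eq_one_iff p hb0).mp hb
    obtain ⟨x, rfl⟩ := ZMod.intCast_surjective r
    exact ⟨x, by rw [pow_one, ← ZMod.intCast_eq_intCast_iff]; push_cast; rw [hr, sq]⟩
  | j + 2 => by
    obtain ⟨x, hx⟩ := isSquareMod_prime_pow_of_legendreSym_eq_one hp2 hb (j + 1)
    push_cast at hx
    have hcop := isCoprime_two_mul_of_sq_modEq hp2 (not_dvd_of_legendreSym_eq_one hb)
      (hx.of_dvd (dvd_pow_self _ j.succ_ne_zero))
    obtain ⟨y, hy⟩ := exists_sq_modEq_pow_succ_succ hcop hx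
    exact ⟨y, by push_cast; exact hy⟩

theorem count_sq_modEq_prime_pow (hp2 : p ≠ 2) {b : ℤ} (hb : legendreSym p b = 1) {j : ℕ}
    (hj : j ≠ 0) : Nat.count (fun n : ℕ => (n : ℤ) ^ 2 ≡ b [ZMOD p ^ j]) (p ^ j) = 2 := by
  have hper : Function.Periodic (fun k : ℤ => k ^ 2 ≡ b [ZMOD p ^ j]) (p ^ j : ℕ) := fun k => by
    have : (k + (p ^ j : ℕ)) ^ 2 ≡ k ^ 2 [ZMOD p ^ j] := by
      push_cast; exact Int.add_modEq_right.pow 2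
    exact propext ⟨this.symm.trans, this.trans⟩
  have hb' := not_dvd_of_legendreSym_eq_one hb
  have hunit : ∀ {k : ℤ}, k ^ 2 ≡ b [ZMOD p ^ j] → IsCoprime (2 * k) p := fun hk =>
    isCoprime_two_mul_of_sq_modEq hp2 hb' (hk.of_dvd (dvd_pow_self _ hj))
  obtain ⟨x, hx⟩ := isSquareMod_prime_pow_of_legendreSym_eq_one hp2 hb j
  push_cast at hx
  have hroots : {s : ZMod (p ^ j) | ∃ k : ℤ, s = k ∧ k ^ 2 ≡ b [ZMOD p ^ j]} =
      {(x : ZMod (p ^ j)), ((-x : ℤ) : ZMod (p ^ j))} := by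
    ext s
    simp only [Set.mem_ofPred_eq, Set.mem_insert_iff, Set.mem_singleton_iff]
    constructor
    · rintro ⟨k, rfl, hk⟩
      simp only [ZMod.intCast_eq_intCast_iff]
      push_cast
      exact modEq_or_modEq_neg_of_sq_modEq_sq (Nat.prime_iff_prime_int.mp hp.out) (hunit hk)
        (hk.trans hx.symm)
    · rintro (rfl | rfl)
      · exact ⟨x, rfl, hx⟩
      · exact ⟨-x, rfl, by rwa [neg_sq]⟩
  rw [← ncard_setOf_intCast_of_periodic hper, hroots, Set.ncard_pair]
  rw [Ne, ZMod.intCast_eq_intCast_iff, Int.modEq_iff_dvd]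
  intro hdvd
  have h2x : (p : ℤ) ∣ 2 * x := by
    push_cast at hdvd
    exact (dvd_pow_self _ hj).trans (by simpa [two_mul, add_comm] using hdvd.neg_right)
  exact (Nat.prime_iff_prime_int.mp hp.out).not_isUnit ((hunit hx).isUnit_of_dvd' h2x dvd_rfl)

theorem dvd_of_sq_modEq_of_dvd {x u : ℤ} {j : ℕ} (hj : j ≠ 0) (hu : (p : ℤ) ∣ u)
    (h : x ^ 2 ≡ u [ZMOD p ^ j]) : (p : ℤ) ∣ x := by
  refine (Nat.prime_iff_prime_int.mp hp.out).dvd_of_dvd_pow (n := 2) ?_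
  simpa using dvd_sub hu ((h.of_dvd (dvd_pow_self _ hj)).dvd)

theorem isSquareMod_prime_sq_mul_iff {w : ℤ} {t : ℕ} :
    IsSquareMod ((p : ℤ) ^ 2 * w) (p ^ (t + 2)) ↔ IsSquareMod w (p ^ t) := by
  have hp0 : (p : ℤ) ^ 2 ≠ 0 := pow_ne_zero 2 (by exact_mod_cast hp.out.ne_zero)
  have hscale : ∀ y : ℤ,
      (p * y) ^ 2 ≡ p ^ 2 * w [ZMOD ↑(p ^ (t + 2))] ↔ y ^ 2 ≡ w [ZMOD ↑(p ^ t)] := fun y => by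
    rw [Int.modEq_iff_dvd, Int.modEq_iff_dvd, Nat.cast_pow, Nat.cast_pow, pow_add,
      mul_comm _ ((p : ℤ) ^ 2), show (p : ℤ) ^ 2 * w - (p * y) ^ 2 = p ^ 2 * (w - y ^ 2) by ring,
      mul_dvd_mul_iff_left hp0]
  refine ⟨fun ⟨x, hx⟩ => ?_, fun ⟨y, hy⟩ => ⟨p * y, (hscale y).mpr hy⟩⟩
  push_cast at hx
  obtain ⟨y, rfl⟩ :=
    dvd_of_sq_modEq_of_dvd (t + 1).succ_ne_zero ((dvd_pow_self _ two_ne_zero).mul_right w) hx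
  exact ⟨y, (hscale y).mp (by push_cast; exact hx)⟩

theorem not_isSquareMod_prime_mul {w : ℤ} (hw : ¬ (p : ℤ) ∣ w) (t : ℕ) :
    ¬ IsSquareMod (p * w) (p ^ (t + 2)) := by
  rintro ⟨x, hx⟩
  push_cast at hx
  obtain ⟨y, rfl⟩ := dvd_of_sq_modEq_of_dvd (t + 1).succ_ne_zero (dvd_mul_right _ w) hx
  have h2 : (p : ℤ) * p ∣ p * w := by
    have := (hx.of_dvd (pow_dvd_pow _ (by omega : 2 ≤ t + 2))).dvd
    rwa [mul_pow, dvd_sub_left (dvd_mul_right _ _), sq] at this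
  exact hw ((mul_dvd_mul_iff_left (by exact_mod_cast hp.out.ne_zero)).mp h2)

theorem isSquareMod_prime_pow_iff_legendreSym (hp2 : p ≠ 2) {w : ℤ} (hw : ¬ (p : ℤ) ∣ w) {t : ℕ}
    (ht : t ≠ 0) : IsSquareMod w (p ^ t) ↔ legendreSym p w = 1 := by
  refine ⟨fun ⟨x, hx⟩ => ?_, fun h => isSquareMod_prime_pow_of_legendreSym_eq_one hp2 h t⟩
  push_cast at hx
  have hxp : x ^ 2 ≡ w [ZMOD p] := hx.of_dvd (dvd_pow_self _ ht)
  have hx0 : (x : ZMod p) ≠ 0 := by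
    rw [Ne, ZMod.intCast_zmod_eq_zero_iff_dvd]
    exact fun hdvd => hw (by simpa using dvd_add hxp.dvd (dvd_pow hdvd two_ne_zero))
  rw [legendreSym.mod, ← hxp, ← legendreSym.mod]
  exact legendreSym.sq_one' p hx0

theorem isSquareMod_prime_pow_mul_iff (hp2 : p ≠ 2) {w : ℤ} (hw : ¬ (p : ℤ) ∣ w) :
    ∀ {e t : ℕ}, e < t → (IsSquareMod ((p : ℤ) ^ e * w) (p ^ t) ↔ Even e ∧ legendreSym p w = 1)
  | 0, t, ht => by simpa using isSquareMod_prime_pow_iff_legendreSym hp2 hw ht.ne'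
  | 1, t + 2, _ => by simpa using not_isSquareMod_prime_mul hw t
  | e + 2, t + 2, het => by
    rw [pow_add, mul_comm ((p : ℤ) ^ e), mul_assoc, isSquareMod_prime_sq_mul_iff,
      isSquareMod_prime_pow_mul_iff hp2 hw (by omega), Nat.even_add, iff_true_right even_two]
  | 1, 0, h | 1, 1, h | _ + 2, 0, h | _ + 2, 1, h => by omega

theorem exists_eq_prime_pow_mul_of_not_dvd {u : ℤ} {t : ℕ} (hu : (p : ℤ) ∣ u)
    (ht : ¬ (p : ℤ) ^ t ∣ u) : ∃ e w, 1 ≤ e ∧ e < t ∧ ¬ (p : ℤ) ∣ w ∧ u = p ^ e * w := by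
  have hu0 : u ≠ 0 := by rintro rfl; exact ht (dvd_zero _)
  obtain ⟨w, hw, hpw⟩ := ((Int.finiteMultiplicity_iff (a := (p : ℤ))).mpr
    ⟨by simpa using hp.out.one_lt.ne', hu0⟩).exists_eq_pow_mul_and_not_dvd
  refine ⟨_, w, Nat.one_le_iff_ne_zero.mpr fun h0 => hpw ?_, lt_of_not_ge fun hle => ht ?_, hpw, hw⟩
  · rwa [hw, h0, pow_zero, one_mul] at hu
  · exact hw ▸ (pow_dvd_pow _ hle).mul_right w

theorem isSquareMod_prime_pow_and_dvd_iff (hp2 : p ≠ 2) {u : ℤ} {t : ℕ} (ht : t ≠ 0) :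
    IsSquareMod u (p ^ t) ∧ (p : ℤ) ∣ u ↔ u ≡ 0 [ZMOD p ^ t] ∨
      ∃ e ∈ Ico 1 t, Even e ∧ ∃ c : ZMod p, quadraticChar (ZMod p) c = 1 ∧
        u ≡ p ^ e * c.val [ZMOD p ^ (e + 1)] := by
  constructor
  · rintro ⟨hsq, hu⟩
    by_cases h0 : (p : ℤ) ^ t ∣ u
    · exact .inl (Int.modEq_zero_iff_dvd.mpr h0)
    obtain ⟨e, w, he1, het, hw, rfl⟩ := exists_eq_prime_pow_mul_of_not_dvd hu h0
    obtain ⟨heven, hleg⟩ := (isSquareMod_prime_pow_mul_iff hp2 hw het).mp hsq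
    refine .inr ⟨e, mem_Ico.mpr ⟨he1, het⟩, heven, w, hleg, ?_⟩
    rw [pow_succ, ZMod.val_intCast]
    exact (Int.mod_modEq w p).symm.mul_left'
  · rintro (h0 | ⟨e, he, heven, c, hc, hu⟩)
    · refine ⟨⟨0, by push_cast; simpa using h0.symm⟩, ?_⟩
      exact (dvd_pow_self _ ht).trans (Int.modEq_zero_iff_dvd.mp h0)
    obtain ⟨he1, het⟩ := mem_Ico.mp he
    obtain ⟨m, hm⟩ := Int.modEq_iff_dvd.mp hu
    set w : ℤ := c.val - p * m
    have hleg : legendreSym p w = 1 :=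
      (congrArg (quadraticChar (ZMod p)) (by simp [w] : (w : ZMod p) = c)).trans hc
    obtain rfl : u = p ^ e * w := by linear_combination -hm
    exact ⟨(isSquareMod_prime_pow_mul_iff hp2 (not_dvd_of_legendreSym_eq_one hleg) het).mpr
      ⟨heven, hleg⟩, (dvd_pow_self _ (by omega)).mul_right w⟩

theorem not_dvd_of_modEq_prime_pow_mul {u c : ℤ} {e : ℕ} (hc : ¬ (p : ℤ) ∣ c)
    (h : u ≡ p ^ e * c [ZMOD p ^ (e + 1)]) : ¬ (p : ℤ) ^ (e + 1) ∣ u := fun hu => by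
  have hdvd : (p : ℤ) ^ e * p ∣ p ^ e * c := by
    rw [← pow_succ]; exact Int.modEq_zero_iff_dvd.mp (h.symm.trans (Int.modEq_zero_iff_dvd.mpr hu))
  exact hc ((mul_dvd_mul_iff_left (pow_ne_zero e (by exact_mod_cast hp.out.ne_zero))).mp hdvd)

theorem eq_and_modEq_of_modEq_prime_pow_mul {u c c' : ℤ} {e e' : ℕ} (hc : ¬ (p : ℤ) ∣ c)
    (hc' : ¬ (p : ℤ) ∣ c') (h : u ≡ p ^ e * c [ZMOD p ^ (e + 1)])
    (h' : u ≡ p ^ e' * c' [ZMOD p ^ (e' + 1)]) : e = e' ∧ c ≡ c' [ZMOD p] := by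
  have hlt : ∀ {e e' : ℕ} {c c' : ℤ}, ¬ (p : ℤ) ∣ c → u ≡ p ^ e * c [ZMOD p ^ (e + 1)] →
      u ≡ p ^ e' * c' [ZMOD p ^ (e' + 1)] → ¬ e < e' := fun hc h h' hlt =>
    not_dvd_of_modEq_prime_pow_mul hc h (Int.modEq_zero_iff_dvd.mp
      ((h'.of_dvd (pow_dvd_pow _ (by omega))).trans
        (Int.modEq_zero_iff_dvd.mpr ((pow_dvd_pow _ hlt).mul_right _))))
  obtain rfl : e = e' := by
    rcases lt_trichotomy e e' with he | he | he
    exacts [absurd he (hlt hc h h'), he, absurd he (hlt hc' h' h)]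
  refine ⟨rfl, Int.modEq_iff_dvd.mpr ?_⟩
  have hdvd := Int.modEq_iff_dvd.mp (h.symm.trans h')
  rw [pow_succ, ← mul_sub] at hdvd
  exact (mul_dvd_mul_iff_left (pow_ne_zero e (by exact_mod_cast hp.out.ne_zero))).mp hdvd

theorem card_sqRoots (hp2 : p ≠ 2) {b : ℤ} (hb : legendreSym p b = 1) {j t : ℕ}
    (hj : j ≠ 0) (hjt : j ≤ t) : #(sqRoots p t j b) = 2 * p ^ (t - j) := by
  have hper : Function.Periodic (fun n : ℕ => (n : ℤ) ^ 2 ≡ b [ZMOD p ^ j]) (p ^ j) := fun n => by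
    have : ((n + p ^ j : ℕ) : ℤ) ^ 2 ≡ n ^ 2 [ZMOD p ^ j] := by
      push_cast; exact Int.add_modEq_right.pow 2
    exact propext ⟨this.symm.trans, this.trans⟩
  rw [sqRoots, ← Nat.count_eq_card_filter_range, ← Nat.pow_sub_mul_pow p hjt,
    Nat.count_mul_of_periodic hper, count_sq_modEq_prime_pow hp2 hb hj, mul_comm]

theorem not_dvd_val_of_mem_squareStrata {t : ℕ} {ec : ℕ × ZMod p} (hec : ec ∈ squareStrata p t) :
    ¬ (p : ℤ) ∣ ec.2.val := by
  have hc : ec.2 ≠ 0 := fun h0 => by simp [squareStrata, h0] at hec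
  rwa [← ZMod.intCast_zmod_eq_zero_iff_dvd, Int.cast_natCast, ZMod.natCast_zmod_val]

open scoped Classical in
theorem filter_isSquareMod_sq_sub_eq (hp2 : p ≠ 2) (a : ℤ) {t : ℕ} (ht : t ≠ 0) :
    ((range (p ^ t)).filter fun n : ℕ =>
        IsSquareMod ((n : ℤ) ^ 2 - a) (p ^ t) ∧ (p : ℤ) ∣ (n : ℤ) ^ 2 - a) =
      sqRoots p t t a ∪ (squareStrata p t).biUnion
        fun ec => sqRoots p t (ec.1 + 1) (a + p ^ ec.1 * ec.2.val) := by
  ext n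
  simp only [mem_filter, mem_union, mem_biUnion, mem_product, sqRoots, squareStrata,
    isSquareMod_prime_pow_and_dvd_iff hp2 ht, Int.sub_modEq_iff_modEq_add, add_zero, mem_univ,
    true_and, Prod.exists]
  constructor
  · rintro ⟨hn, h | ⟨e, he, heven, c, hc, h⟩⟩
    exacts [.inl ⟨hn, h⟩, .inr ⟨e, c, ⟨⟨he, heven⟩, hc⟩, hn, h⟩]
  · rintro (⟨hn, h⟩ | ⟨e, c, ⟨⟨he, heven⟩, hc⟩, hn, h⟩)
    exacts [⟨hn, .inl h⟩, ⟨hn, .inr ⟨e, he, heven, c, hc, h⟩⟩]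

theorem disjoint_sqRoots_biUnion_squareStrata (a : ℤ) (t : ℕ) :
    Disjoint (sqRoots p t t a) ((squareStrata p t).biUnion
      fun ec => sqRoots p t (ec.1 + 1) (a + p ^ ec.1 * ec.2.val)) := by
  refine (disjoint_biUnion_right _ _ _).mpr fun ec hec => disjoint_left.mpr fun n hn hn' => ?_
  simp only [sqRoots, mem_filter, ← Int.sub_modEq_iff_modEq_add] at hn hn'
  have he : ec.1 + 1 ≤ t := (mem_Ico.mp (mem_filter.mp (mem_product.mp hec).1).1).2
  exact not_dvd_of_modEq_prime_pow_mul (not_dvd_val_of_mem_squareStrata hec) hn'.2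
    ((pow_dvd_pow _ he).trans hn.2.symm.dvd)

theorem pairwiseDisjoint_squareStrata (a : ℤ) (t : ℕ) :
    (squareStrata p t : Set (ℕ × ZMod p)).PairwiseDisjoint
      fun ec => sqRoots p t (ec.1 + 1) (a + p ^ ec.1 * ec.2.val) := by
  intro x hx y hy hxy
  refine disjoint_left.mpr fun n hn hn' => hxy ?_
  simp only [sqRoots, mem_filter, ← Int.sub_modEq_iff_modEq_add] at hn hn'
  obtain ⟨he, hc⟩ := eq_and_modEq_of_modEq_prime_pow_mul (not_dvd_val_of_mem_squareStrata hx)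
    (not_dvd_val_of_mem_squareStrata hy) hn.2 hn'.2
  exact Prod.ext he (by simpa using (ZMod.intCast_eq_intCast_iff _ _ p).mpr hc)

open scoped Classical in
theorem card_filter_isSquareMod_sq_sub (hp2 : p ≠ 2) {a : ℤ} (ha : legendreSym p a = 1) {t : ℕ}
    (ht : t ≠ 0) :
    #((range (p ^ t)).filter fun n : ℕ =>
        IsSquareMod ((n : ℤ) ^ 2 - a) (p ^ t) ∧ (p : ℤ) ∣ (n : ℤ) ^ 2 - a) =
      2 + ∑ e ∈ Ico 1 t with Even e, (p - 1) * p ^ (t - e - 1) := by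
  rw [filter_isSquareMod_sq_sub_eq hp2 a ht,
    card_union_of_disjoint (disjoint_sqRoots_biUnion_squareStrata a t),
    card_biUnion (pairwiseDisjoint_squareStrata a t), card_sqRoots hp2 ha ht le_rfl,
    Nat.sub_self, pow_zero, mul_one, squareStrata, sum_product]
  refine congrArg _ (sum_congr rfl fun e he => ?_)
  obtain ⟨⟨he1, het⟩, -⟩ : (1 ≤ e ∧ e < t) ∧ Even e := by simpa using he
  have hcard : ∀ c : ZMod p, #(sqRoots p t (e + 1) (a + p ^ e * c.val)) = 2 * p ^ (t - e - 1) :=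
    fun c => by
      rw [Nat.sub_sub]
      refine card_sqRoots hp2 ?_ e.succ_ne_zero het
      rw [legendreSym_add_prime_pow_mul _ _ (by omega), ha]
  rw [sum_congr rfl fun c _ => hcard c, sum_const, smul_eq_mul, ← mul_assoc, mul_comm _ 2,
    two_mul_card_quadraticChar_eq_one (by simp [ZMod.ringChar_zmod_n, hp2]), ZMod.card]

open scoped Classical in
theorem ncard_S2'' {a : ℤ} {t : ℕ} (ht : t ≠ 0) :
    (S2'' a p t).ncard = #((range (p ^ t)).filter fun n : ℕ =>
        IsSquareMod ((n : ℤ) ^ 2 - a) (p ^ t) ∧ (p : ℤ) ∣ (n : ℤ) ^ 2 - a) := by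
  have : NeZero (p ^ t) := ⟨pow_ne_zero _ hp.out.ne_zero⟩
  have hper : Function.Periodic (fun k : ℤ => IsSquareMod (k ^ 2 - a) (p ^ t) ∧ (p : ℤ) ∣ k ^ 2 - a)
      (p ^ t : ℕ) := fun k => by
    have h : (k + (p ^ t : ℕ)) ^ 2 - a ≡ k ^ 2 - a [ZMOD (p ^ t : ℕ)] :=
      (Int.add_modEq_right.pow 2).sub_right a
    dsimp only
    rw [isSquareMod_congr h, (h.of_dvd (by push_cast; exact dvd_pow_self _ ht)).dvd_iff]
  rw [S2'', ncard_setOf_intCast_of_periodic hper, Nat.count_eq_card_filter_range]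

end PrimePower

theorem stmt8_general (p : ℕ) [hp : Fact p.Prime] (hp2 : p ≠ 2) (t : ℕ) (ht : 1 ≤ t)
    (a : ℤ) :
    (legendreSym p a = -1 → (S2'' a p t).ncard = 0) ∧
    (legendreSym p a = 1 →
      ((S2'' a p t).ncard : ℚ) = (p : ℚ) ^ (t - 1) / ((p : ℚ) + 1) + 3 / 2 +
        (-1 : ℚ) ^ (t - 1) * ((p : ℚ) - 1) / (2 * ((p : ℚ) + 1))) := by
  have ht0 : t ≠ 0 := Nat.one_le_iff_ne_zero.mp ht
  refine ⟨fun hneg => ?_, fun hpos => ?_⟩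
  · have hempty : S2'' a p t = ∅ := Set.eq_empty_of_forall_notMem fun _ ⟨_, _, _, hdvd⟩ =>
      legendreSym_ne_neg_one_of_dvd_sq_sub hdvd hneg
    rw [hempty, Set.ncard_empty]
  · rw [ncard_S2'' ht0, card_filter_isSquareMod_sq_sub hp2 hpos ht0,
      cast_two_add_sum_Ico_even hp.out.one_lt.le ht0]

theorem stmt8 (p : ℕ) [hp : Fact p.Prime] (hp2 : p ≠ 2) (t : ℕ) (ht : 1 ≤ t)
    (a : ℤ) (ha : IsCoprime a (p : ℤ)) :
    (legendreSym p a = -1 → (S2'' a p t).ncard = 0) ∧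
    (legendreSym p a = 1 →
      ((S2'' a p t).ncard : ℚ) = (p : ℚ) ^ (t - 1) / ((p : ℚ) + 1) + 3 / 2 +
        (-1 : ℚ) ^ (t - 1) * ((p : ℚ) - 1) / (2 * ((p : ℚ) + 1))) :=
  stmt8_general p (hp := hp) hp2 t ht a
end
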